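/- arXiv:math-ph/0311039 — 9 statements merged into one kernel-verified Lean document; each statement's English description precedes it below -/
import Mathlib

section
/- Let γ ≠ 0 be a real constant and set γ̂ = (4−γ)/γ. Let T, X, Ψ : ℝ → ℝ be smooth with T′(t) > 0 for all t and with T surjective (so that Φ(t,x) = (T(t), x·√(T′(t)) + X(t)) is a bijection of ℝ×ℝ). Let V : ℝ×ℝ → ℂ be continuous and let ψ be a smooth solution of NLS(γ, V) on ℝ×ℝ. Define ψ̃, Ṽ : ℝ×ℝ → ℂ by requiring, for all (t,x): ψ̃(T(t), x·√(T′(t)) + X(t)) = (T′(t))^(−1/γ) · ψ(t,x) · exp( i·( T″(t)·x²/(8·T′(t)) + X′(t)·x/(2·√(T′(t))) + Ψ(t) ) ) and Ṽ(T(t), x·√(T′(t)) + X(t)) = (1/T′(t)) · [ V(t,x) + (1/8)·(d/dt)(T″/T′)(t)·x² + (1/2)·(d/dt)(X′/√(T′))(t)·x + i·(γ̂/4)·T″(t)/T′(t) − ( T″(t)·x/(4·T′(t)) + X′(t)/(2·√(T′(t))) )² + Ψ′(t) ]. Then ψ̃ is a smooth solution of NLS(γ, Ṽ) on ℝ×ℝ.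 -/
/-- `ψ` is a smooth solution of the nonlinear Schrödinger equation
`i ψ_t + ψ_xx + |ψ|^γ ψ + V ψ = 0` on the set `Ω ⊆ ℝ × ℝ`. -/
def SolvesNLS (γ : ℝ) (V : ℝ → ℝ → ℂ) (ψ : ℝ → ℝ → ℂ) (Ω : Set (ℝ × ℝ)) : Prop :=
  ContDiffOn ℝ (⊤ : ℕ∞) (fun p : ℝ × ℝ => ψ p.1 p.2) Ω ∧
  ∀ p ∈ Ω,
    Complex.I * deriv (fun t => ψ t p.2) p.1
      + deriv (deriv (fun x => ψ p.1 x)) p.2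
      + ((‖ψ p.1 p.2‖ ^ γ : ℝ) : ℂ) * ψ p.1 p.2
      + V p.1 p.2 * ψ p.1 p.2 = 0

lemma FA (gam p1 p2 p3 q1 q2 r s0 d c cm1 w i E pv pt px pxx Vv : ℂ)
    (hii : i * i = -1)
    (hcc : cm1 = c * p1⁻¹)
    (hPS : p1⁻¹ = s0⁻¹ * s0⁻¹)
    (hp : p1 = s0 * s0)
    (hS : s0 * s0⁻¹ = 1)
    (hG : gam * gam⁻¹ = 1)
    (key : i * pt + pxx + w * pv + Vv * pv = 0) :
    i * (p1⁻¹ * ((p2 * (-1/gam) * cm1 * pv + c * pt) * E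
          + (c * pv) * (E * (i * ((p3*(d/s0)^2*(8*p1) - (p2*(d/s0)^2)*(8*p2))/(8*p1)^2
              + ((q2*(d/s0))*(2*s0) - (q1*(d/s0))*(2*(1/(2*s0)*p2)))/(2*s0)^2 + r))))
        + ((0 - q1*p1⁻¹)*s0 - d*((1/(2*s0)*p2)*p1⁻¹))/s0^2
            * ((c * px) * E + (c * pv) * (E * (i * (p2*(d/s0)/(4*p1) + q1/(2*s0))))))
      + ((c * pxx) * E + (c * px) * (E * (i * (p2*(d/s0)/(4*p1) + q1/(2*s0))))
          + ((c * px) * (E * (i * (p2*(d/s0)/(4*p1) + q1/(2*s0))))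
            + (c * pv) * ((E * (i * (p2*(d/s0)/(4*p1) + q1/(2*s0)))) * (i * (p2*(d/s0)/(4*p1) + q1/(2*s0)))
                + E * (i * (p2/(4*p1)))))) * (1/s0) * (1/s0)
      + (w * p1⁻¹) * (c * pv * E)
      + ((1/p1) * (Vv + (1/8) * ((p3*p1 - p2*p2)/p1^2) * (d/s0)^2
          + (1/2) * ((q2*s0 - q1*(1/(2*s0)*p2))/s0^2) * (d/s0)
          + i * (((4-gam)/gam/4) * (p2/p1))
          - (p2*(d/s0)/(4*p1) + q1/(2*s0))^2 + r)) * (c * pv * E) = 0 := by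
  linear_combination (c*E*p1⁻¹)*key
    + (E*c*pv*p1⁻¹*r + (1/4)*E*c*pv*(s0⁻¹)^4*q1^2 + (-1/2)*E*c*pv*s0*(s0⁻¹)^3*p1⁻¹*q1^2 + (-1/4)*E*c*pv*d*(s0⁻¹)^4*p1⁻¹*p2*q1 + (1/2)*E*c*pv*d*s0*(s0⁻¹)^3*p1⁻¹*q2 + (-1/4)*E*c*pv*d*s0*(s0⁻¹)^3*(p1⁻¹)^2*p2*q1 + (-1/8)*E*c*pv*d^2*(s0⁻¹)^2*(p1⁻¹)^3*p2^2 + (1/8)*E*c*pv*d^2*(s0⁻¹)^2*p1*(p1⁻¹)^3*p3 + (-1/16)*E*c*pv*d^2*(s0⁻¹)^4*(p1⁻¹)^2*p2^2)*hii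
    + ((-1)*i*E*pv*p1⁻¹*p2*gam⁻¹)*hcc
    + ((-1)*E*c*pxx + (-1/4)*E*c*pv*(s0⁻¹)^2*q1^2 + (1/2)*E*c*pv*s0*(s0⁻¹)^3*q1^2 + (-1/4)*E*c*pv*d*(s0⁻¹)^2*p1⁻¹*p2*q1 + (-1/4)*E*c*pv*d*(s0⁻¹)^4*p2*q1 + (1/4)*E*c*pv*d*s0*(s0⁻¹)^3*p1⁻¹*p2*q1 + (1/4)*E*c*pv*d*s0*(s0⁻¹)^5*p2*q1 + (-1/16)*E*c*pv*d^2*(s0⁻¹)^2*(p1⁻¹)^2*p2^2 + (-1)*i*E*c*px*s0*(s0⁻¹)^2*q1 + (-1/4)*i*E*c*pv*p1⁻¹*p2*gam*gam⁻¹ + (1/4)*i*E*c*pv*(s0⁻¹)^2*p2 + (-1/4)*i*E*c*pv*(s0⁻¹)^2*p2*gam*gam⁻¹)*hPS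
    + ((1/2)*E*c*pv*(s0⁻¹)^4*q1^2 + (1/4)*E*c*pv*d*(s0⁻¹)^6*p2*q1 + (-1)*i*E*c*px*(s0⁻¹)^3*q1)*hS
    + ((-1/4)*i*E*c*pv*(s0⁻¹)^4*p2)*hG

lemma exists_smooth_inverse (T : ℝ → ℝ) (hTa : ∀ t, ContDiffAt ℝ (⊤ : ℕ∞) T t)
    (hT' : ∀ t, 0 < deriv T t) (hs : Function.Surjective T) :
    ∃ S : ℝ → ℝ, (∀ t, S (T t) = t) ∧ (∀ τ, T (S τ) = τ) ∧
      (∀ τ, ContDiffAt ℝ (⊤ : ℕ∞) S τ) ∧ ∀ τ, HasDerivAt S (deriv T (S τ))⁻¹ τ := by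
  have hmono : StrictMono T := strictMono_of_deriv_pos hT'
  let e : ℝ ≃o ℝ := StrictMono.orderIsoOfSurjective T hmono hs
  have hTd : Differentiable ℝ T := fun t => ((hTa t).differentiableAt (by simp))
  have hTe : ∀ t, e t = T t := fun t => rfl
  refine ⟨fun τ => e.symm τ, fun t => ?_, fun τ => ?_, fun τ => ?_, fun τ => ?_⟩
  · exact e.symm_apply_apply t
  · exact e.apply_symm_apply τ
  · -- smoothness of the inverse
    exact e.toHomeomorph.toOpenPartialHomeomorph.contDiffAt_symm_deriv (hT' (e.symm τ)).ne'
      (by simp) ((hTd _).hasDerivAt) (hTa _)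
  · -- derivative of the inverse
    refine HasDerivAt.of_local_left_inverse ?_ (hTd _).hasDerivAt
      (hT' _).ne' ?_
    · exact (e.toHomeomorph.symm.continuous).continuousAt
    · exact Filter.Eventually.of_forall fun y => e.apply_symm_apply y

/-- The general point equivalence transformation (2) of the paper maps
solutions of `NLS(γ, V)` to solutions of `NLS(γ, Ṽ)`. -/
theorem stmt_0 (γ : ℝ) (hγ : γ ≠ 0) (T X Ψ : ℝ → ℝ)
    (hT : ContDiff ℝ (⊤ : ℕ∞) T) (hX : ContDiff ℝ (⊤ : ℕ∞) X) (hΨ : ContDiff ℝ (⊤ : ℕ∞) Ψ)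
    (hT' : ∀ t, 0 < deriv T t) (hTsurj : Function.Surjective T)
    (V : ℝ → ℝ → ℂ) (hV : Continuous (fun p : ℝ × ℝ => V p.1 p.2))
    (ψ : ℝ → ℝ → ℂ) (hψ : SolvesNLS γ V ψ Set.univ)
    (ψt Vt : ℝ → ℝ → ℂ)
    (hψt : ∀ t x, ψt (T t) (x * Real.sqrt (deriv T t) + X t) =
      ((deriv T t ^ (-1 / γ) : ℝ) : ℂ) * ψ t x *
        Complex.exp (Complex.I *
          ((deriv (deriv T) t * x ^ 2 / (8 * deriv T t)
            + deriv X t * x / (2 * Real.sqrt (deriv T t)) + Ψ t : ℝ) : ℂ)))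
    (hVt : ∀ t x, Vt (T t) (x * Real.sqrt (deriv T t) + X t) =
      (1 / ((deriv T t : ℝ) : ℂ)) *
        (V t x
          + (((1 / 8) * deriv (fun s => deriv (deriv T) s / deriv T s) t * x ^ 2 : ℝ) : ℂ)
          + (((1 / 2) * deriv (fun s => deriv X s / Real.sqrt (deriv T s)) t * x : ℝ) : ℂ)
          + Complex.I * (((((4 - γ) / γ) / 4) * (deriv (deriv T) t / deriv T t) : ℝ) : ℂ)
          - (((deriv (deriv T) t * x / (4 * deriv T t)
              + deriv X t / (2 * Real.sqrt (deriv T t))) ^ 2 : ℝ) : ℂ)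
          + ((deriv Ψ t : ℝ) : ℂ))) :
    SolvesNLS γ Vt ψt Set.univ := by
  classical
  have hψG : ContDiff ℝ (⊤ : ℕ∞) (fun p : ℝ × ℝ => ψ p.1 p.2) := contDiffOn_univ.mp hψ.1
  have hTA : ContDiff ℝ (⊤ : ℕ∞) T := hT
  have hT1 : ContDiff ℝ (⊤ : ℕ∞) (deriv T) := (contDiff_infty_iff_deriv.mp hT).2
  have hT2 : ContDiff ℝ (⊤ : ℕ∞) (deriv (deriv T)) := (contDiff_infty_iff_deriv.mp hT1).2
  have hXA : ContDiff ℝ (⊤ : ℕ∞) X := hX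
  have hX1 : ContDiff ℝ (⊤ : ℕ∞) (deriv X) := (contDiff_infty_iff_deriv.mp hX).2
  have hΨA : ContDiff ℝ (⊤ : ℕ∞) Ψ := hΨ
  obtain ⟨S, hS1, hS2, hSA, hSD⟩ := exists_smooth_inverse T (fun t => hTA.contDiffAt) hT' hTsurj
  have hs0pos : ∀ t, 0 < Real.sqrt (deriv T t) := fun t => Real.sqrt_pos.mpr (hT' t)
  set HH : ℝ × ℝ → ℂ := fun q : ℝ × ℝ =>
    ((deriv T q.1 ^ (-1 / γ) : ℝ) : ℂ) * ψ q.1 q.2 *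
      Complex.exp (Complex.I *
        ((deriv (deriv T) q.1 * q.2 ^ 2 / (8 * deriv T q.1)
          + deriv X q.1 * q.2 / (2 * Real.sqrt (deriv T q.1)) + Ψ q.1 : ℝ) : ℂ)) with hHHdef
  have hRep : ∀ τ ξ : ℝ, ψt τ ξ = HH (S τ, (ξ - X (S τ)) / Real.sqrt (deriv T (S τ))) := by
    intro τ ξ
    have h := hψt (S τ) ((ξ - X (S τ)) / Real.sqrt (deriv T (S τ)))
    rw [hS2 τ, div_mul_cancel₀ _ (hs0pos (S τ)).ne', sub_add_cancel] at h
    exact h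
  have hH_ana : ContDiff ℝ (⊤ : ℕ∞) HH := by
    have a1 : ContDiff ℝ (⊤ : ℕ∞) (fun q : ℝ × ℝ => deriv T q.1) := hT1.comp contDiff_fst
    have a2 : ContDiff ℝ (⊤ : ℕ∞) (fun q : ℝ × ℝ => deriv T q.1 ^ (-1 / γ)) :=
      a1.rpow_const_of_ne (fun q => (hT' q.1).ne')
    have a3 : ContDiff ℝ (⊤ : ℕ∞) (fun q : ℝ × ℝ => ((deriv T q.1 ^ (-1 / γ) : ℝ) : ℂ)) :=
      Complex.ofRealCLM.contDiff.comp a2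
    have a4 : ContDiff ℝ (⊤ : ℕ∞) (fun q : ℝ × ℝ => ψ q.1 q.2) := hψG
    have a5 : ContDiff ℝ (⊤ : ℕ∞) (fun q : ℝ × ℝ => deriv (deriv T) q.1 * q.2 ^ 2 / (8 * deriv T q.1)) :=
      ((hT2.comp contDiff_fst).mul (contDiff_snd.pow 2)).div
        (contDiff_const.mul a1) (fun q => (mul_pos (by norm_num : (0:ℝ) < 8) (hT' q.1)).ne')
    have a6 : ContDiff ℝ (⊤ : ℕ∞) (fun q : ℝ × ℝ => deriv X q.1 * q.2 / (2 * Real.sqrt (deriv T q.1))) :=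
      ((hX1.comp contDiff_fst).mul contDiff_snd).div
        (contDiff_const.mul (a1.sqrt (fun q => (hT' q.1).ne')))
        (fun q => (mul_pos two_pos (hs0pos q.1)).ne')
    have a7 : ContDiff ℝ (⊤ : ℕ∞) (fun q : ℝ × ℝ => Ψ q.1) := hΨA.comp contDiff_fst
    have a8 : ContDiff ℝ (⊤ : ℕ∞) (fun q : ℝ × ℝ =>
        ((deriv (deriv T) q.1 * q.2 ^ 2 / (8 * deriv T q.1)
          + deriv X q.1 * q.2 / (2 * Real.sqrt (deriv T q.1)) + Ψ q.1 : ℝ) : ℂ)) :=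
      Complex.ofRealCLM.contDiff.comp ((a5.add a6).add a7)
    have a9 : ContDiff ℝ (⊤ : ℕ∞) (fun q : ℝ × ℝ =>
        Complex.exp (Complex.I *
          ((deriv (deriv T) q.1 * q.2 ^ 2 / (8 * deriv T q.1)
            + deriv X q.1 * q.2 / (2 * Real.sqrt (deriv T q.1)) + Ψ q.1 : ℝ) : ℂ))) :=
      (contDiff_const.mul a8).cexp
    exact (a3.mul a4).mul a9
  constructor
  · rw [contDiffOn_univ]
    have heq : (fun q : ℝ × ℝ => ψt q.1 q.2)
        = fun q : ℝ × ℝ => HH (S q.1, (q.2 - X (S q.1)) / Real.sqrt (deriv T (S q.1))) :=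
      funext fun q => hRep q.1 q.2
    rw [heq]
    have b1 : ContDiff ℝ (⊤ : ℕ∞) (fun q : ℝ × ℝ => S q.1) :=
      (contDiff_iff_contDiffAt.mpr hSA).comp contDiff_fst
    have b2 : ContDiff ℝ (⊤ : ℕ∞) (fun q : ℝ × ℝ => X (S q.1)) := hXA.comp b1
    have b3 : ContDiff ℝ (⊤ : ℕ∞) (fun q : ℝ × ℝ => deriv T (S q.1)) := hT1.comp b1
    have b4 : ContDiff ℝ (⊤ : ℕ∞) (fun q : ℝ × ℝ => Real.sqrt (deriv T (S q.1))) :=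
      b3.sqrt (fun q => (hT' _).ne')
    exact hH_ana.comp (b1.prodMk ((contDiff_snd.sub b2).div b4 (fun q => (hs0pos _).ne')))
  rintro ⟨τ, ξ⟩ -
  dsimp only
  have hp1 : (0:ℝ) < deriv T (S τ) := hT' (S τ)
  have hs0 : (0:ℝ) < Real.sqrt (deriv T (S τ)) := hs0pos (S τ)
  -- basic one-variable derivatives at (S τ)
  have hdT' : HasDerivAt (deriv T) (deriv (deriv T) (S τ)) (S τ) := (hT1.differentiable (by simp) _).hasDerivAt
  have hdT'' : HasDerivAt (deriv (deriv T)) (deriv (deriv (deriv T)) (S τ)) (S τ) := (hT2.differentiable (by simp) _).hasDerivAt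
  have hdX : HasDerivAt X (deriv X (S τ)) (S τ) := (hXA.differentiable (by simp) _).hasDerivAt
  have hdX' : HasDerivAt (deriv X) (deriv (deriv X) (S τ)) (S τ) := (hX1.differentiable (by simp) _).hasDerivAt
  have hdΨ : HasDerivAt Ψ (deriv Ψ (S τ)) (S τ) := (hΨA.differentiable (by simp) _).hasDerivAt
  have hdsqrt : HasDerivAt (fun s => Real.sqrt (deriv T s)) (1 / (2 * Real.sqrt (deriv T (S τ))) * deriv (deriv T) (S τ)) (S τ) :=
    (Real.hasDerivAt_sqrt hp1.ne').comp (S τ) hdT'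
  have hdc : HasDerivAt (fun s => deriv T s ^ (-1 / γ)) (deriv (deriv T) (S τ) * (-1 / γ) * (deriv T (S τ) ^ (-1 / γ - 1))) (S τ) :=
    hdT'.rpow_const (Or.inl hp1.ne')
  -- slice derivatives of ψ
  have hsliceX : ContDiff ℝ (⊤ : ℕ∞) (fun y => ψ (S τ) y) :=
    hψG.comp (contDiff_const.prodMk contDiff_id)
  have hptd : HasDerivAt (fun t' => ψ t' ((ξ - X (S τ)) / Real.sqrt (deriv T (S τ)))) (deriv (fun t' => ψ t' ((ξ - X (S τ)) / Real.sqrt (deriv T (S τ)))) (S τ)) (S τ) :=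
    ((hψG.comp (contDiff_id.prodMk contDiff_const)).differentiable (by simp) _).hasDerivAt
  have hpxd : ∀ y : ℝ, HasDerivAt (fun y' => ψ (S τ) y') (deriv (fun y => ψ (S τ) y) y) y := fun y =>
    (hsliceX.differentiable (by simp) y).hasDerivAt
  have hpxxd : HasDerivAt (deriv (fun y => ψ (S τ) y)) (deriv (deriv (fun y => ψ (S τ) y)) ((ξ - X (S τ)) / Real.sqrt (deriv T (S τ)))) ((ξ - X (S τ)) / Real.sqrt (deriv T (S τ))) :=
    ((contDiff_infty_iff_deriv.mp hsliceX).2.differentiable (by simp) _).hasDerivAt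
  -- θ slice in y and its derivative
  have hθy : ∀ y : ℝ, HasDerivAt (fun y' : ℝ => (deriv (deriv T) (S τ) * y' ^ 2 / (8 * deriv T (S τ)) + deriv X (S τ) * y' / (2 * Real.sqrt (deriv T (S τ))) + Ψ (S τ))) ((deriv (deriv T) (S τ) * y / (4 * deriv T (S τ)) + deriv X (S τ) / (2 * Real.sqrt (deriv T (S τ))))) y := by
    intro y
    have h1 : HasDerivAt (fun y' : ℝ => deriv (deriv T) (S τ) * y' ^ 2 / (8 * deriv T (S τ))) (deriv (deriv T) (S τ) * (2 * y) / (8 * deriv T (S τ))) y := by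
      have := ((hasDerivAt_pow 2 y).const_mul (deriv (deriv T) (S τ))).div_const (8 * deriv T (S τ))
      refine this.congr_deriv ?_
      push_cast; ring
    have h2 : HasDerivAt (fun y' : ℝ => deriv X (S τ) * y' / (2 * Real.sqrt (deriv T (S τ)))) (deriv X (S τ) / (2 * Real.sqrt (deriv T (S τ)))) y := by
      have := ((hasDerivAt_id y).const_mul (deriv X (S τ))).div_const (2 * Real.sqrt (deriv T (S τ)))
      refine this.congr_deriv ?_
      ring
    have := (h1.add h2).add_const (Ψ (S τ))
    refine this.congr_deriv ?_
    ring
  have hEy : ∀ y : ℝ, HasDerivAt (fun y' : ℝ => Complex.exp (Complex.I * (((deriv (deriv T) (S τ) * y' ^ 2 / (8 * deriv T (S τ)) + deriv X (S τ) * y' / (2 * Real.sqrt (deriv T (S τ))) + Ψ (S τ)) : ℝ) : ℂ)))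
      (Complex.exp (Complex.I * (((deriv (deriv T) (S τ) * y ^ 2 / (8 * deriv T (S τ)) + deriv X (S τ) * y / (2 * Real.sqrt (deriv T (S τ))) + Ψ (S τ)) : ℝ) : ℂ)) * (Complex.I * (((deriv (deriv T) (S τ) * y / (4 * deriv T (S τ)) + deriv X (S τ) / (2 * Real.sqrt (deriv T (S τ)))) : ℝ) : ℂ))) y := fun y =>
    (((hθy y).ofReal_comp).const_mul Complex.I).cexp
  -- first x-derivative function G1
  have hgd : ∀ y : ℝ, HasDerivAt
      (fun y' : ℝ => ((deriv T (S τ) ^ (-1 / γ) : ℝ) : ℂ) * ψ (S τ) y' * Complex.exp (Complex.I * (((deriv (deriv T) (S τ) * y' ^ 2 / (8 * deriv T (S τ)) + deriv X (S τ) * y' / (2 * Real.sqrt (deriv T (S τ))) + Ψ (S τ)) : ℝ) : ℂ)))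
      ((((deriv T (S τ) ^ (-1 / γ) : ℝ) : ℂ) * deriv (fun y => ψ (S τ) y) y) * Complex.exp (Complex.I * (((deriv (deriv T) (S τ) * y ^ 2 / (8 * deriv T (S τ)) + deriv X (S τ) * y / (2 * Real.sqrt (deriv T (S τ))) + Ψ (S τ)) : ℝ) : ℂ)) + (((deriv T (S τ) ^ (-1 / γ) : ℝ) : ℂ) * ψ (S τ) y) * (Complex.exp (Complex.I * (((deriv (deriv T) (S τ) * y ^ 2 / (8 * deriv T (S τ)) + deriv X (S τ) * y / (2 * Real.sqrt (deriv T (S τ))) + Ψ (S τ)) : ℝ) : ℂ)) * (Complex.I * (((deriv (deriv T) (S τ) * y / (4 * deriv T (S τ)) + deriv X (S τ) / (2 * Real.sqrt (deriv T (S τ)))) : ℝ) : ℂ)))) y := fun y =>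
    (((hpxd y).const_mul ((deriv T (S τ) ^ (-1 / γ) : ℝ) : ℂ)).mul (hEy y))
  -- second x-derivative at XV
  have hTHX : HasDerivAt (fun y : ℝ => (deriv (deriv T) (S τ) * y / (4 * deriv T (S τ)) + deriv X (S τ) / (2 * Real.sqrt (deriv T (S τ))))) (deriv (deriv T) (S τ) / (4 * deriv T (S τ))) ((ξ - X (S τ)) / Real.sqrt (deriv T (S τ))) := by
    have := (((hasDerivAt_id (((ξ - X (S τ)) / Real.sqrt (deriv T (S τ))) : ℝ)).const_mul (deriv (deriv T) (S τ))).div_const (4 * deriv T (S τ))).add_const (deriv X (S τ) / (2 * Real.sqrt (deriv T (S τ))))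
    refine this.congr_deriv ?_
    ring
  have hgd2 : HasDerivAt (fun y : ℝ => (((deriv T (S τ) ^ (-1 / γ) : ℝ) : ℂ) * deriv (fun y => ψ (S τ) y) y) * Complex.exp (Complex.I * (((deriv (deriv T) (S τ) * y ^ 2 / (8 * deriv T (S τ)) + deriv X (S τ) * y / (2 * Real.sqrt (deriv T (S τ))) + Ψ (S τ)) : ℝ) : ℂ)) + (((deriv T (S τ) ^ (-1 / γ) : ℝ) : ℂ) * ψ (S τ) y) * (Complex.exp (Complex.I * (((deriv (deriv T) (S τ) * y ^ 2 / (8 * deriv T (S τ)) + deriv X (S τ) * y / (2 * Real.sqrt (deriv T (S τ))) + Ψ (S τ)) : ℝ) : ℂ)) * (Complex.I * (((deriv (deriv T) (S τ) * y / (4 * deriv T (S τ)) + deriv X (S τ) / (2 * Real.sqrt (deriv T (S τ)))) : ℝ) : ℂ)))) ((((deriv T (S τ) ^ (-1 / γ) : ℝ) : ℂ) * deriv (deriv (fun y => ψ (S τ) y)) ((ξ - X (S τ)) / Real.sqrt (deriv T (S τ)))) * Complex.exp (Complex.I * (((deriv (deriv T) (S τ) * ((ξ - X (S τ)) / Real.sqrt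 (deriv T (S τ))) ^ 2 / (8 * deriv T (S τ)) + deriv X (S τ) * ((ξ - X (S τ)) / Real.sqrt (deriv T (S τ))) / (2 * Real.sqrt (deriv T (S τ))) + Ψ (S τ)) : ℝ) : ℂ)) + (((deriv T (S τ) ^ (-1 / γ) : ℝ) : ℂ) * deriv (fun y => ψ (S τ) y) ((ξ - X (S τ)) / Real.sqrt (deriv T (S τ)))) * (Complex.exp (Complex.I * (((deriv (deriv T) (S τ) * ((ξ - X (S τ)) / Real.sqrt (deriv T (S τ))) ^ 2 / (8 * deriv T (S τ)) + deriv X (S τ) * ((ξ - X (S τ)) / Real.sqrt (deriv T (S τ))) / (2 * Real.sqrt (deriv T (S τ))) + Ψ (S τ)) : ℝ) : ℂ)) * (Complex.I * (((deriv (deriv T) (S τ) * ((ξ - X (S τ)) / Real.sqrt (deriv T (S τ))) / (4 * deriv T (S τ)) + deriv X (S τ) / (2 * Real.sqrt (deriv T (S τ)))) : ℝ) : ℂ))) + ((((deriv T (S τ) ^ (-1 / γ) : ℝ) : ℂ) * deriv (fun y => ψ (S τ) y) ((ξ - X (S τ)) / Real.sqrt (deriv T (S τ)))) * (Complex.exp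 (Complex.I * (((deriv (deriv T) (S τ) * ((ξ - X (S τ)) / Real.sqrt (deriv T (S τ))) ^ 2 / (8 * deriv T (S τ)) + deriv X (S τ) * ((ξ - X (S τ)) / Real.sqrt (deriv T (S τ))) / (2 * Real.sqrt (deriv T (S τ))) + Ψ (S τ)) : ℝ) : ℂ)) * (Complex.I * (((deriv (deriv T) (S τ) * ((ξ - X (S τ)) / Real.sqrt (deriv T (S τ))) / (4 * deriv T (S τ)) + deriv X (S τ) / (2 * Real.sqrt (deriv T (S τ)))) : ℝ) : ℂ))) + (((deriv T (S τ) ^ (-1 / γ) : ℝ) : ℂ) * ψ (S τ) ((ξ - X (S τ)) / Real.sqrt (deriv T (S τ)))) * ((Complex.exp (Complex.I * (((deriv (deriv T) (S τ) * ((ξ - X (S τ)) / Real.sqrt (deriv T (S τ))) ^ 2 / (8 * deriv T (S τ)) + deriv X (S τ) * ((ξ - X (S τ)) / Real.sqrt (deriv T (S τ))) / (2 * Real.sqrt (deriv T (S τ))) + Ψ (S τ)) : ℝ) : ℂ)) * (Complex.I * (((deriv (deriv T) (S τ) * ((ξ - X (S τ)) / Real.sqrt (deriv T (S τ))) / (4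 * deriv T (S τ)) + deriv X (S τ) / (2 * Real.sqrt (deriv T (S τ)))) : ℝ) : ℂ))) * (Complex.I * (((deriv (deriv T) (S τ) * ((ξ - X (S τ)) / Real.sqrt (deriv T (S τ))) / (4 * deriv T (S τ)) + deriv X (S τ) / (2 * Real.sqrt (deriv T (S τ)))) : ℝ) : ℂ)) + Complex.exp (Complex.I * (((deriv (deriv T) (S τ) * ((ξ - X (S τ)) / Real.sqrt (deriv T (S τ))) ^ 2 / (8 * deriv T (S τ)) + deriv X (S τ) * ((ξ - X (S τ)) / Real.sqrt (deriv T (S τ))) / (2 * Real.sqrt (deriv T (S τ))) + Ψ (S τ)) : ℝ) : ℂ)) * (Complex.I * (((deriv (deriv T) (S τ) / (4 * deriv T (S τ))) : ℝ) : ℂ))))) ((ξ - X (S τ)) / Real.sqrt (deriv T (S τ))) := by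
    have term1 := (hpxxd.const_mul ((deriv T (S τ) ^ (-1 / γ) : ℝ) : ℂ)).mul (hEy ((ξ - X (S τ)) / Real.sqrt (deriv T (S τ))))
    have term2inner := (hEy ((ξ - X (S τ)) / Real.sqrt (deriv T (S τ)))).mul ((hTHX.ofReal_comp).const_mul Complex.I)
    have term2 := ((hpxd ((ξ - X (S τ)) / Real.sqrt (deriv T (S τ)))).const_mul ((deriv T (S τ) ^ (-1 / γ) : ℝ) : ℂ)).mul term2inner
    exact term1.add term2
  -- spatial derivatives of ψt
  have hfun1 : (fun ξ' => ψt τ ξ')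
      = fun ξ' : ℝ => ((deriv T (S τ) ^ (-1 / γ) : ℝ) : ℂ) * ψ (S τ) ((ξ' - X (S τ)) / Real.sqrt (deriv T (S τ))) * Complex.exp (Complex.I * (((deriv (deriv T) (S τ) * ((ξ' - X (S τ)) / Real.sqrt (deriv T (S τ))) ^ 2 / (8 * deriv T (S τ)) + deriv X (S τ) * ((ξ' - X (S τ)) / Real.sqrt (deriv T (S τ))) / (2 * Real.sqrt (deriv T (S τ))) + Ψ (S τ)) : ℝ) : ℂ)) :=
    funext fun ξ' => hRep τ ξ'
  have hL : ∀ ξ' : ℝ, HasDerivAt (fun ξ'' : ℝ => (ξ'' - X (S τ)) / Real.sqrt (deriv T (S τ))) (1 / Real.sqrt (deriv T (S τ))) ξ' := by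
    intro ξ'
    exact ((hasDerivAt_id ξ').sub_const (X (S τ))).div_const (Real.sqrt (deriv T (S τ)))
  have hD2a : deriv (fun ξ' => ψt τ ξ')
      = fun ξ'' : ℝ => (1 / Real.sqrt (deriv T (S τ)) : ℝ) • ((((deriv T (S τ) ^ (-1 / γ) : ℝ) : ℂ) * deriv (fun y => ψ (S τ) y) ((ξ'' - X (S τ)) / Real.sqrt (deriv T (S τ)))) * Complex.exp (Complex.I * (((deriv (deriv T) (S τ) * ((ξ'' - X (S τ)) / Real.sqrt (deriv T (S τ))) ^ 2 / (8 * deriv T (S τ)) + deriv X (S τ) * ((ξ'' - X (S τ)) / Real.sqrt (deriv T (S τ))) / (2 * Real.sqrt (deriv T (S τ))) + Ψ (S τ)) : ℝ) : ℂ)) + (((deriv T (S τ) ^ (-1 / γ) : ℝ) : ℂ) * ψ (S τ) ((ξ'' - X (S τ)) / Real.sqrt (deriv T (S τ)))) * (Complex.exp (Complex.I * (((deriv (deriv T) (S τ) * ((ξ'' - X (S τ)) / Real.sqrt (deriv T (S τ))) ^ 2 / (8 * deriv T (S τ)) + deriv X (S τ) * ((ξ'' - X (S τ)) / Real.sqrt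 (deriv T (S τ))) / (2 * Real.sqrt (deriv T (S τ))) + Ψ (S τ)) : ℝ) : ℂ)) * (Complex.I * (((deriv (deriv T) (S τ) * ((ξ'' - X (S τ)) / Real.sqrt (deriv T (S τ))) / (4 * deriv T (S τ)) + deriv X (S τ) / (2 * Real.sqrt (deriv T (S τ)))) : ℝ) : ℂ)))) := by
    funext ξ''
    rw [hfun1]
    exact ((hgd ((ξ'' - X (S τ)) / Real.sqrt (deriv T (S τ)))).scomp ξ'' (hL ξ'')).deriv
  have hD2 : deriv (deriv (fun ξ' => ψt τ ξ')) ξ = (1 / Real.sqrt (deriv T (S τ)) : ℝ) • ((1 / Real.sqrt (deriv T (S τ)) : ℝ) • ((((deriv T (S τ) ^ (-1 / γ) : ℝ) : ℂ) * deriv (deriv (fun y => ψ (S τ) y)) ((ξ - X (S τ)) / Real.sqrt (deriv T (S τ)))) * Complex.exp (Complex.I * (((deriv (deriv T) (S τ) * ((ξ - X (S τ)) / Real.sqrt (deriv T (S τ))) ^ 2 / (8 * deriv T (S τ)) + deriv X (S τ) * ((ξ - X (S τ)) / Real.sqrt (deriv T (S τ))) / (2 * Real.sqrt (deriv T (S τ)))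 + Ψ (S τ)) : ℝ) : ℂ)) + (((deriv T (S τ) ^ (-1 / γ) : ℝ) : ℂ) * deriv (fun y => ψ (S τ) y) ((ξ - X (S τ)) / Real.sqrt (deriv T (S τ)))) * (Complex.exp (Complex.I * (((deriv (deriv T) (S τ) * ((ξ - X (S τ)) / Real.sqrt (deriv T (S τ))) ^ 2 / (8 * deriv T (S τ)) + deriv X (S τ) * ((ξ - X (S τ)) / Real.sqrt (deriv T (S τ))) / (2 * Real.sqrt (deriv T (S τ))) + Ψ (S τ)) : ℝ) : ℂ)) * (Complex.I * (((deriv (deriv T) (S τ) * ((ξ - X (S τ)) / Real.sqrt (deriv T (S τ))) / (4 * deriv T (S τ)) + deriv X (S τ) / (2 * Real.sqrt (deriv T (S τ)))) : ℝ) : ℂ))) + ((((deriv T (S τ) ^ (-1 / γ) : ℝ) : ℂ) * deriv (fun y => ψ (S τ) y) ((ξ - X (S τ)) / Real.sqrt (deriv T (S τ)))) * (Complex.exp (Complex.I * (((deriv (deriv T) (S τ) * ((ξ - X (S τ)) / Real.sqrt (deriv T (S τ))) ^ 2 / (8 * deriv T (S τ)) + deriv X (S τ) * ((ξ - X (S τ))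 / Real.sqrt (deriv T (S τ))) / (2 * Real.sqrt (deriv T (S τ))) + Ψ (S τ)) : ℝ) : ℂ)) * (Complex.I * (((deriv (deriv T) (S τ) * ((ξ - X (S τ)) / Real.sqrt (deriv T (S τ))) / (4 * deriv T (S τ)) + deriv X (S τ) / (2 * Real.sqrt (deriv T (S τ)))) : ℝ) : ℂ))) + (((deriv T (S τ) ^ (-1 / γ) : ℝ) : ℂ) * ψ (S τ) ((ξ - X (S τ)) / Real.sqrt (deriv T (S τ)))) * ((Complex.exp (Complex.I * (((deriv (deriv T) (S τ) * ((ξ - X (S τ)) / Real.sqrt (deriv T (S τ))) ^ 2 / (8 * deriv T (S τ)) + deriv X (S τ) * ((ξ - X (S τ)) / Real.sqrt (deriv T (S τ))) / (2 * Real.sqrt (deriv T (S τ))) + Ψ (S τ)) : ℝ) : ℂ)) * (Complex.I * (((deriv (deriv T) (S τ) * ((ξ - X (S τ)) / Real.sqrt (deriv T (S τ))) / (4 * deriv T (S τ)) + deriv X (S τ) / (2 * Real.sqrt (deriv T (S τ)))) : ℝ) : ℂ))) * (Complex.I * (((deriv (deriv T) (S τ) * ((ξ - X (S τ)) / Real.sqrt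 (deriv T (S τ))) / (4 * deriv T (S τ)) + deriv X (S τ) / (2 * Real.sqrt (deriv T (S τ)))) : ℝ) : ℂ)) + Complex.exp (Complex.I * (((deriv (deriv T) (S τ) * ((ξ - X (S τ)) / Real.sqrt (deriv T (S τ))) ^ 2 / (8 * deriv T (S τ)) + deriv X (S τ) * ((ξ - X (S τ)) / Real.sqrt (deriv T (S τ))) / (2 * Real.sqrt (deriv T (S τ))) + Ψ (S τ)) : ℝ) : ℂ)) * (Complex.I * (((deriv (deriv T) (S τ) / (4 * deriv T (S τ))) : ℝ) : ℂ)))))) := by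
    rw [hD2a]
    exact ((hgd2.scomp ξ (hL ξ)).const_smul ((1 / Real.sqrt (deriv T (S τ))) : ℝ)).deriv
  -- time derivative of ψt
  have hHd : DifferentiableAt ℝ HH ((S τ), ((ξ - X (S τ)) / Real.sqrt (deriv T (S τ)))) := hH_ana.differentiable (by simp) _
  have hθt : HasDerivAt (fun s : ℝ => deriv (deriv T) s * ((ξ - X (S τ)) / Real.sqrt (deriv T (S τ))) ^ 2 / (8 * deriv T s) + deriv X s * ((ξ - X (S τ)) / Real.sqrt (deriv T (S τ))) / (2 * Real.sqrt (deriv T s)) + Ψ s)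
      (((deriv (deriv (deriv T)) (S τ) * ((ξ - X (S τ)) / Real.sqrt (deriv T (S τ))) ^ 2 * (8 * deriv T (S τ)) - deriv (deriv T) (S τ) * ((ξ - X (S τ)) / Real.sqrt (deriv T (S τ))) ^ 2 * (8 * deriv (deriv T) (S τ))) / (8 * deriv T (S τ)) ^ 2 + ((deriv (deriv X) (S τ) * ((ξ - X (S τ)) / Real.sqrt (deriv T (S τ)))) * (2 * Real.sqrt (deriv T (S τ))) - (deriv X (S τ) * ((ξ - X (S τ)) / Real.sqrt (deriv T (S τ)))) * (2 * (1 / (2 * Real.sqrt (deriv T (S τ))) * deriv (deriv T) (S τ)))) / (2 * Real.sqrt (deriv T (S τ))) ^ 2 + deriv Ψ (S τ))) (S τ) := by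
    have t1 := (hdT''.mul_const (((ξ - X (S τ)) / Real.sqrt (deriv T (S τ))) ^ 2)).div (hdT'.const_mul 8) (mul_pos (by norm_num : (0:ℝ) < 8) hp1).ne'
    have t2 := (hdX'.mul_const (((ξ - X (S τ)) / Real.sqrt (deriv T (S τ))))).div (hdsqrt.const_mul 2) (mul_pos two_pos hs0).ne'
    exact (t1.add t2).add hdΨ
  have hcE : HasDerivAt (fun s : ℝ => Complex.exp (Complex.I * ((deriv (deriv T) s * ((ξ - X (S τ)) / Real.sqrt (deriv T (S τ))) ^ 2 / (8 * deriv T s) + deriv X s * ((ξ - X (S τ)) / Real.sqrt (deriv T (S τ))) / (2 * Real.sqrt (deriv T s)) + Ψ s : ℝ) : ℂ)))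
      (Complex.exp (Complex.I * (((deriv (deriv T) (S τ) * ((ξ - X (S τ)) / Real.sqrt (deriv T (S τ))) ^ 2 / (8 * deriv T (S τ)) + deriv X (S τ) * ((ξ - X (S τ)) / Real.sqrt (deriv T (S τ))) / (2 * Real.sqrt (deriv T (S τ))) + Ψ (S τ)) : ℝ) : ℂ)) * (Complex.I * ((((deriv (deriv (deriv T)) (S τ) * ((ξ - X (S τ)) / Real.sqrt (deriv T (S τ))) ^ 2 * (8 * deriv T (S τ)) - deriv (deriv T) (S τ) * ((ξ - X (S τ)) / Real.sqrt (deriv T (S τ))) ^ 2 * (8 * deriv (deriv T) (S τ))) / (8 * deriv T (S τ)) ^ 2 + ((deriv (deriv X) (S τ) * ((ξ - X (S τ)) / Real.sqrt (deriv T (S τ)))) * (2 * Real.sqrt (deriv T (S τ))) - (deriv X (S τ) * ((ξ - X (S τ)) / Real.sqrt (deriv T (S τ)))) * (2 * (1 / (2 * Real.sqrt (deriv T (S τ))) * deriv (deriv T) (S τ)))) / (2 * Real.sqrt (deriv T (S τ))) ^ 2 + deriv Ψ (S τ)) : ℝ) : ℂ))) (S τ) :=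
    ((hθt.ofReal_comp).const_mul Complex.I).cexp
  have hcψ : HasDerivAt (fun s : ℝ => ((deriv T s ^ (-1 / γ) : ℝ) : ℂ) * ψ s ((ξ - X (S τ)) / Real.sqrt (deriv T (S τ))))
      (((deriv (deriv T) (S τ) * (-1 / γ) * (deriv T (S τ) ^ (-1 / γ - 1)) : ℝ) : ℂ) * ψ (S τ) ((ξ - X (S τ)) / Real.sqrt (deriv T (S τ))) + ((deriv T (S τ) ^ (-1 / γ) : ℝ) : ℂ) * deriv (fun t' => ψ t' ((ξ - X (S τ)) / Real.sqrt (deriv T (S τ)))) (S τ)) (S τ) :=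
    (hdc.ofReal_comp).mul hptd
  have hHtfull : HasDerivAt (fun s : ℝ => ((deriv T s ^ (-1 / γ) : ℝ) : ℂ) * ψ s ((ξ - X (S τ)) / Real.sqrt (deriv T (S τ))) * Complex.exp (Complex.I * ((deriv (deriv T) s * ((ξ - X (S τ)) / Real.sqrt (deriv T (S τ))) ^ 2 / (8 * deriv T s) + deriv X s * ((ξ - X (S τ)) / Real.sqrt (deriv T (S τ))) / (2 * Real.sqrt (deriv T s)) + Ψ s : ℝ) : ℂ)))
      ((((deriv (deriv T) (S τ) * (-1 / γ) * (deriv T (S τ) ^ (-1 / γ - 1)) : ℝ) : ℂ) * ψ (S τ) ((ξ - X (S τ)) / Real.sqrt (deriv T (S τ))) + ((deriv T (S τ) ^ (-1 / γ) : ℝ) : ℂ) * deriv (fun t' => ψ t' ((ξ - X (S τ)) / Real.sqrt (deriv T (S τ)))) (S τ)) * Complex.exp (Complex.I * (((deriv (deriv T) (S τ) * ((ξ - X (S τ)) / Real.sqrt (deriv T (S τ))) ^ 2 / (8 * deriv T (S τ)) + deriv X (S τ) * ((ξ - X (S τ)) / Real.sqrt (deriv T (S τ))) / (2 * Real.sqrt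 (deriv T (S τ))) + Ψ (S τ)) : ℝ) : ℂ)) + (((deriv T (S τ) ^ (-1 / γ) : ℝ) : ℂ) * ψ (S τ) ((ξ - X (S τ)) / Real.sqrt (deriv T (S τ)))) * (Complex.exp (Complex.I * (((deriv (deriv T) (S τ) * ((ξ - X (S τ)) / Real.sqrt (deriv T (S τ))) ^ 2 / (8 * deriv T (S τ)) + deriv X (S τ) * ((ξ - X (S τ)) / Real.sqrt (deriv T (S τ))) / (2 * Real.sqrt (deriv T (S τ))) + Ψ (S τ)) : ℝ) : ℂ)) * (Complex.I * ((((deriv (deriv (deriv T)) (S τ) * ((ξ - X (S τ)) / Real.sqrt (deriv T (S τ))) ^ 2 * (8 * deriv T (S τ)) - deriv (deriv T) (S τ) * ((ξ - X (S τ)) / Real.sqrt (deriv T (S τ))) ^ 2 * (8 * deriv (deriv T) (S τ))) / (8 * deriv T (S τ)) ^ 2 + ((deriv (deriv X) (S τ) * ((ξ - X (S τ)) / Real.sqrt (deriv T (S τ)))) * (2 * Real.sqrt (deriv T (S τ))) - (deriv X (S τ) * ((ξ - X (S τ)) / Real.sqrt (deriv T (S τ)))) * (2 * (1 / (2 * Real.sqrt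 (deriv T (S τ))) * deriv (deriv T) (S τ)))) / (2 * Real.sqrt (deriv T (S τ))) ^ 2 + deriv Ψ (S τ)) : ℝ) : ℂ)))) (S τ) := hcψ.mul hcE
  have h0t : HasDerivAt (fun s : ℝ => HH (s, ((ξ - X (S τ)) / Real.sqrt (deriv T (S τ))))) (fderiv ℝ HH ((S τ), ((ξ - X (S τ)) / Real.sqrt (deriv T (S τ)))) (1, 0)) (S τ) :=
    by have h := hHd.hasFDerivAt.comp_hasDerivAt (S τ) ((hasDerivAt_id (S τ)).prodMk (hasDerivAt_const (S τ) (((ξ - X (S τ)) / Real.sqrt (deriv T (S τ))) : ℝ))); exact h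
  have hfd1 : fderiv ℝ HH ((S τ), ((ξ - X (S τ)) / Real.sqrt (deriv T (S τ)))) (1, 0) = (((deriv (deriv T) (S τ) * (-1 / γ) * (deriv T (S τ) ^ (-1 / γ - 1)) : ℝ) : ℂ) * ψ (S τ) ((ξ - X (S τ)) / Real.sqrt (deriv T (S τ))) + ((deriv T (S τ) ^ (-1 / γ) : ℝ) : ℂ) * deriv (fun t' => ψ t' ((ξ - X (S τ)) / Real.sqrt (deriv T (S τ)))) (S τ)) * Complex.exp (Complex.I * (((deriv (deriv T) (S τ) * ((ξ - X (S τ)) / Real.sqrt (deriv T (S τ))) ^ 2 / (8 * deriv T (S τ)) + deriv X (S τ) * ((ξ - X (S τ)) / Real.sqrt (deriv T (S τ))) / (2 * Real.sqrt (deriv T (S τ))) + Ψ (S τ)) : ℝ) : ℂ)) + (((deriv T (S τ) ^ (-1 / γ) : ℝ) : ℂ) * ψ (S τ) ((ξ - X (S τ)) / Real.sqrt (deriv T (S τ)))) * (Complex.exp (Complex.I * (((deriv (deriv T) (S τ) * ((ξ - X (S τ)) / Real.sqrt (deriv T (S τ))) ^ 2 / (8 * deriv T (S τ)) + deriv X (S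 τ) * ((ξ - X (S τ)) / Real.sqrt (deriv T (S τ))) / (2 * Real.sqrt (deriv T (S τ))) + Ψ (S τ)) : ℝ) : ℂ)) * (Complex.I * ((((deriv (deriv (deriv T)) (S τ) * ((ξ - X (S τ)) / Real.sqrt (deriv T (S τ))) ^ 2 * (8 * deriv T (S τ)) - deriv (deriv T) (S τ) * ((ξ - X (S τ)) / Real.sqrt (deriv T (S τ))) ^ 2 * (8 * deriv (deriv T) (S τ))) / (8 * deriv T (S τ)) ^ 2 + ((deriv (deriv X) (S τ) * ((ξ - X (S τ)) / Real.sqrt (deriv T (S τ)))) * (2 * Real.sqrt (deriv T (S τ))) - (deriv X (S τ) * ((ξ - X (S τ)) / Real.sqrt (deriv T (S τ)))) * (2 * (1 / (2 * Real.sqrt (deriv T (S τ))) * deriv (deriv T) (S τ)))) / (2 * Real.sqrt (deriv T (S τ))) ^ 2 + deriv Ψ (S τ)) : ℝ) : ℂ))) := h0t.unique hHtfull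
  have h0x : HasDerivAt (fun y : ℝ => HH ((S τ), y)) (fderiv ℝ HH ((S τ), ((ξ - X (S τ)) / Real.sqrt (deriv T (S τ)))) (0, 1)) ((ξ - X (S τ)) / Real.sqrt (deriv T (S τ))) :=
    hHd.hasFDerivAt.comp_hasDerivAt ((ξ - X (S τ)) / Real.sqrt (deriv T (S τ))) ((hasDerivAt_const (((ξ - X (S τ)) / Real.sqrt (deriv T (S τ))) : ℝ) ((S τ) : ℝ)).prodMk (hasDerivAt_id ((ξ - X (S τ)) / Real.sqrt (deriv T (S τ)))))
  have hfd2 : fderiv ℝ HH ((S τ), ((ξ - X (S τ)) / Real.sqrt (deriv T (S τ)))) (0, 1) = (((deriv T (S τ) ^ (-1 / γ) : ℝ) : ℂ) * deriv (fun y => ψ (S τ) y) ((ξ - X (S τ)) / Real.sqrt (deriv T (S τ)))) * Complex.exp (Complex.I * (((deriv (deriv T) (S τ) * ((ξ - X (S τ)) / Real.sqrt (deriv T (S τ))) ^ 2 / (8 * deriv T (S τ)) + deriv X (S τ) * ((ξ - X (S τ)) / Real.sqrt (deriv T (S τ))) / (2 * Real.sqrt (deriv T (S τ))) + Ψ (S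 τ)) : ℝ) : ℂ)) + (((deriv T (S τ) ^ (-1 / γ) : ℝ) : ℂ) * ψ (S τ) ((ξ - X (S τ)) / Real.sqrt (deriv T (S τ)))) * (Complex.exp (Complex.I * (((deriv (deriv T) (S τ) * ((ξ - X (S τ)) / Real.sqrt (deriv T (S τ))) ^ 2 / (8 * deriv T (S τ)) + deriv X (S τ) * ((ξ - X (S τ)) / Real.sqrt (deriv T (S τ))) / (2 * Real.sqrt (deriv T (S τ))) + Ψ (S τ)) : ℝ) : ℂ)) * (Complex.I * (((deriv (deriv T) (S τ) * ((ξ - X (S τ)) / Real.sqrt (deriv T (S τ))) / (4 * deriv T (S τ)) + deriv X (S τ) / (2 * Real.sqrt (deriv T (S τ)))) : ℝ) : ℂ))) := h0x.unique (hgd ((ξ - X (S τ)) / Real.sqrt (deriv T (S τ))))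
  have hρ2 : HasDerivAt (fun τ' : ℝ => (ξ - X (S τ')) / Real.sqrt (deriv T (S τ')))
      ((((0 - deriv X (S τ) * (deriv T (S τ))⁻¹) * Real.sqrt (deriv T (S τ)) - (ξ - X (S τ)) * (1 / (2 * Real.sqrt (deriv T (S τ))) * deriv (deriv T) (S τ) * (deriv T (S τ))⁻¹)) / Real.sqrt (deriv T (S τ)) ^ 2)) τ := by
    have hnum : HasDerivAt (fun τ' : ℝ => ξ - X (S τ')) (0 - deriv X (S τ) * (deriv T (S τ))⁻¹) τ :=
      (hasDerivAt_const τ ξ).sub (hdX.comp τ (hSD τ))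
    have hden : HasDerivAt (fun τ' : ℝ => Real.sqrt (deriv T (S τ'))) (1 / (2 * Real.sqrt (deriv T (S τ))) * deriv (deriv T) (S τ) * (deriv T (S τ))⁻¹) τ :=
      hdsqrt.comp τ (hSD τ)
    exact hnum.div hden hs0.ne'
  have hcurve : HasDerivAt (fun τ' : ℝ => HH (S τ', (ξ - X (S τ')) / Real.sqrt (deriv T (S τ'))))
      (fderiv ℝ HH ((S τ), ((ξ - X (S τ)) / Real.sqrt (deriv T (S τ)))) (((deriv T (S τ)))⁻¹, (((0 - deriv X (S τ) * (deriv T (S τ))⁻¹) * Real.sqrt (deriv T (S τ)) - (ξ - X (S τ)) * (1 / (2 * Real.sqrt (deriv T (S τ))) * deriv (deriv T) (S τ) * (deriv T (S τ))⁻¹)) / Real.sqrt (deriv T (S τ)) ^ 2))) τ :=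
    by have h := hHd.hasFDerivAt.comp_hasDerivAt τ ((hSD τ).prodMk hρ2); exact h
  have hdec : fderiv ℝ HH ((S τ), ((ξ - X (S τ)) / Real.sqrt (deriv T (S τ)))) (((deriv T (S τ)))⁻¹, (((0 - deriv X (S τ) * (deriv T (S τ))⁻¹) * Real.sqrt (deriv T (S τ)) - (ξ - X (S τ)) * (1 / (2 * Real.sqrt (deriv T (S τ))) * deriv (deriv T) (S τ) * (deriv T (S τ))⁻¹)) / Real.sqrt (deriv T (S τ)) ^ 2))
      = (((deriv T (S τ))⁻¹ : ℝ) : ℂ) * ((((deriv (deriv T) (S τ) * (-1 / γ) * (deriv T (S τ) ^ (-1 / γ - 1)) : ℝ) : ℂ) * ψ (S τ) ((ξ - X (S τ)) / Real.sqrt (deriv T (S τ))) + ((deriv T (S τ) ^ (-1 / γ) : ℝ) : ℂ) * deriv (fun t' => ψ t' ((ξ - X (S τ)) / Real.sqrt (deriv T (S τ)))) (S τ)) * Complex.exp (Complex.I * (((deriv (deriv T) (S τ) * ((ξ - X (S τ)) / Real.sqrt (deriv T (S τ))) ^ 2 / (8 * deriv T (S τ)) + deriv X (S τ) * ((ξ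 - X (S τ)) / Real.sqrt (deriv T (S τ))) / (2 * Real.sqrt (deriv T (S τ))) + Ψ (S τ)) : ℝ) : ℂ)) + (((deriv T (S τ) ^ (-1 / γ) : ℝ) : ℂ) * ψ (S τ) ((ξ - X (S τ)) / Real.sqrt (deriv T (S τ)))) * (Complex.exp (Complex.I * (((deriv (deriv T) (S τ) * ((ξ - X (S τ)) / Real.sqrt (deriv T (S τ))) ^ 2 / (8 * deriv T (S τ)) + deriv X (S τ) * ((ξ - X (S τ)) / Real.sqrt (deriv T (S τ))) / (2 * Real.sqrt (deriv T (S τ))) + Ψ (S τ)) : ℝ) : ℂ)) * (Complex.I * ((((deriv (deriv (deriv T)) (S τ) * ((ξ - X (S τ)) / Real.sqrt (deriv T (S τ))) ^ 2 * (8 * deriv T (S τ)) - deriv (deriv T) (S τ) * ((ξ - X (S τ)) / Real.sqrt (deriv T (S τ))) ^ 2 * (8 * deriv (deriv T) (S τ))) / (8 * deriv T (S τ)) ^ 2 + ((deriv (deriv X) (S τ) * ((ξ - X (S τ)) / Real.sqrt (deriv T (S τ)))) * (2 * Real.sqrt (deriv T (S τ))) - (deriv X (S τ) * ((ξ - X (S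 τ)) / Real.sqrt (deriv T (S τ)))) * (2 * (1 / (2 * Real.sqrt (deriv T (S τ))) * deriv (deriv T) (S τ)))) / (2 * Real.sqrt (deriv T (S τ))) ^ 2 + deriv Ψ (S τ)) : ℝ) : ℂ)))) + (((((0 - deriv X (S τ) * (deriv T (S τ))⁻¹) * Real.sqrt (deriv T (S τ)) - (ξ - X (S τ)) * (1 / (2 * Real.sqrt (deriv T (S τ))) * deriv (deriv T) (S τ) * (deriv T (S τ))⁻¹)) / Real.sqrt (deriv T (S τ)) ^ 2) : ℝ) : ℂ) * ((((deriv T (S τ) ^ (-1 / γ) : ℝ) : ℂ) * deriv (fun y => ψ (S τ) y) ((ξ - X (S τ)) / Real.sqrt (deriv T (S τ)))) * Complex.exp (Complex.I * (((deriv (deriv T) (S τ) * ((ξ - X (S τ)) / Real.sqrt (deriv T (S τ))) ^ 2 / (8 * deriv T (S τ)) + deriv X (S τ) * ((ξ - X (S τ)) / Real.sqrt (deriv T (S τ))) / (2 * Real.sqrt (deriv T (S τ))) + Ψ (S τ)) : ℝ) : ℂ)) + (((deriv T (S τ) ^ (-1 / γ) : ℝ) : ℂ) * ψ (S τ) ((ξ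 - X (S τ)) / Real.sqrt (deriv T (S τ)))) * (Complex.exp (Complex.I * (((deriv (deriv T) (S τ) * ((ξ - X (S τ)) / Real.sqrt (deriv T (S τ))) ^ 2 / (8 * deriv T (S τ)) + deriv X (S τ) * ((ξ - X (S τ)) / Real.sqrt (deriv T (S τ))) / (2 * Real.sqrt (deriv T (S τ))) + Ψ (S τ)) : ℝ) : ℂ)) * (Complex.I * (((deriv (deriv T) (S τ) * ((ξ - X (S τ)) / Real.sqrt (deriv T (S τ))) / (4 * deriv T (S τ)) + deriv X (S τ) / (2 * Real.sqrt (deriv T (S τ)))) : ℝ) : ℂ)))) := by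
    have hv : ((((deriv T (S τ)))⁻¹ : ℝ), ((((0 - deriv X (S τ) * (deriv T (S τ))⁻¹) * Real.sqrt (deriv T (S τ)) - (ξ - X (S τ)) * (1 / (2 * Real.sqrt (deriv T (S τ))) * deriv (deriv T) (S τ) * (deriv T (S τ))⁻¹)) / Real.sqrt (deriv T (S τ)) ^ 2) : ℝ))
        = (deriv T (S τ))⁻¹ • ((1:ℝ), (0:ℝ)) + ((((0 - deriv X (S τ) * (deriv T (S τ))⁻¹) * Real.sqrt (deriv T (S τ)) - (ξ - X (S τ)) * (1 / (2 * Real.sqrt (deriv T (S τ))) * deriv (deriv T) (S τ) * (deriv T (S τ))⁻¹)) / Real.sqrt (deriv T (S τ)) ^ 2)) • ((0:ℝ), (1:ℝ)) := by simp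
    rw [hv, map_add, map_smul, map_smul, hfd1, hfd2, Complex.real_smul, Complex.real_smul]
  have hfun2 : (fun t' => ψt t' ξ)
      = fun τ' : ℝ => HH (S τ', (ξ - X (S τ')) / Real.sqrt (deriv T (S τ'))) :=
    funext fun τ' => hRep τ' ξ
  have hD1 : deriv (fun t' => ψt t' ξ) τ
      = (((deriv T (S τ))⁻¹ : ℝ) : ℂ) * ((((deriv (deriv T) (S τ) * (-1 / γ) * (deriv T (S τ) ^ (-1 / γ - 1)) : ℝ) : ℂ) * ψ (S τ) ((ξ - X (S τ)) / Real.sqrt (deriv T (S τ))) + ((deriv T (S τ) ^ (-1 / γ) : ℝ) : ℂ) * deriv (fun t' => ψ t' ((ξ - X (S τ)) / Real.sqrt (deriv T (S τ)))) (S τ)) * Complex.exp (Complex.I * (((deriv (deriv T) (S τ) * ((ξ - X (S τ)) / Real.sqrt (deriv T (S τ))) ^ 2 / (8 * deriv T (S τ)) + deriv X (S τ) * ((ξ - X (S τ)) / Real.sqrt (deriv T (S τ))) / (2 * Real.sqrt (deriv T (S τ))) + Ψ (S τ)) : ℝ) : ℂ)) + (((deriv T (S τ) ^ (-1 / γ)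 : ℝ) : ℂ) * ψ (S τ) ((ξ - X (S τ)) / Real.sqrt (deriv T (S τ)))) * (Complex.exp (Complex.I * (((deriv (deriv T) (S τ) * ((ξ - X (S τ)) / Real.sqrt (deriv T (S τ))) ^ 2 / (8 * deriv T (S τ)) + deriv X (S τ) * ((ξ - X (S τ)) / Real.sqrt (deriv T (S τ))) / (2 * Real.sqrt (deriv T (S τ))) + Ψ (S τ)) : ℝ) : ℂ)) * (Complex.I * ((((deriv (deriv (deriv T)) (S τ) * ((ξ - X (S τ)) / Real.sqrt (deriv T (S τ))) ^ 2 * (8 * deriv T (S τ)) - deriv (deriv T) (S τ) * ((ξ - X (S τ)) / Real.sqrt (deriv T (S τ))) ^ 2 * (8 * deriv (deriv T) (S τ))) / (8 * deriv T (S τ)) ^ 2 + ((deriv (deriv X) (S τ) * ((ξ - X (S τ)) / Real.sqrt (deriv T (S τ)))) * (2 * Real.sqrt (deriv T (S τ))) - (deriv X (S τ) * ((ξ - X (S τ)) / Real.sqrt (deriv T (S τ)))) * (2 * (1 / (2 * Real.sqrt (deriv T (S τ))) * deriv (deriv T) (S τ)))) / (2 * Real.sqrt (deriv T (S τ))) ^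 2 + deriv Ψ (S τ)) : ℝ) : ℂ)))) + (((((0 - deriv X (S τ) * (deriv T (S τ))⁻¹) * Real.sqrt (deriv T (S τ)) - (ξ - X (S τ)) * (1 / (2 * Real.sqrt (deriv T (S τ))) * deriv (deriv T) (S τ) * (deriv T (S τ))⁻¹)) / Real.sqrt (deriv T (S τ)) ^ 2) : ℝ) : ℂ) * ((((deriv T (S τ) ^ (-1 / γ) : ℝ) : ℂ) * deriv (fun y => ψ (S τ) y) ((ξ - X (S τ)) / Real.sqrt (deriv T (S τ)))) * Complex.exp (Complex.I * (((deriv (deriv T) (S τ) * ((ξ - X (S τ)) / Real.sqrt (deriv T (S τ))) ^ 2 / (8 * deriv T (S τ)) + deriv X (S τ) * ((ξ - X (S τ)) / Real.sqrt (deriv T (S τ))) / (2 * Real.sqrt (deriv T (S τ))) + Ψ (S τ)) : ℝ) : ℂ)) + (((deriv T (S τ) ^ (-1 / γ) : ℝ) : ℂ) * ψ (S τ) ((ξ - X (S τ)) / Real.sqrt (deriv T (S τ)))) * (Complex.exp (Complex.I * (((deriv (deriv T) (S τ) * ((ξ - X (S τ)) / Real.sqrt (deriv T (S τ))) ^ 2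 / (8 * deriv T (S τ)) + deriv X (S τ) * ((ξ - X (S τ)) / Real.sqrt (deriv T (S τ))) / (2 * Real.sqrt (deriv T (S τ))) + Ψ (S τ)) : ℝ) : ℂ)) * (Complex.I * (((deriv (deriv T) (S τ) * ((ξ - X (S τ)) / Real.sqrt (deriv T (S τ))) / (4 * deriv T (S τ)) + deriv X (S τ) / (2 * Real.sqrt (deriv T (S τ)))) : ℝ) : ℂ)))) := by
    rw [hfun2, hcurve.deriv, hdec]
  -- value and modulus
  have hval : ψt τ ξ = ((deriv T (S τ) ^ (-1 / γ) : ℝ) : ℂ) * ψ (S τ) ((ξ - X (S τ)) / Real.sqrt (deriv T (S τ))) * Complex.exp (Complex.I * (((deriv (deriv T) (S τ) * ((ξ - X (S τ)) / Real.sqrt (deriv T (S τ))) ^ 2 / (8 * deriv T (S τ)) + deriv X (S τ) * ((ξ - X (S τ)) / Real.sqrt (deriv T (S τ))) / (2 * Real.sqrt (deriv T (S τ))) + Ψ (S τ)) : ℝ) : ℂ)) := hRep τ ξ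
  have hCCpos : (0:ℝ) < deriv T (S τ) ^ (-1 / γ) := Real.rpow_pos_of_pos hp1 _
  have habsR : ‖ψt τ ξ‖ ^ γ = ‖ψ (S τ) ((ξ - X (S τ)) / Real.sqrt (deriv T (S τ)))‖ ^ γ / deriv T (S τ) := by
    have h1 : ‖ψt τ ξ‖ = (deriv T (S τ) ^ (-1 / γ)) * ‖ψ (S τ) ((ξ - X (S τ)) / Real.sqrt (deriv T (S τ)))‖ := by
      rw [hval, norm_mul, norm_mul, Complex.norm_real, Real.norm_eq_abs, abs_of_nonneg hCCpos.le, mul_comm Complex.I,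
        Complex.norm_exp_ofReal_mul_I, mul_one]
    rw [h1, Real.mul_rpow hCCpos.le (norm_nonneg _), ← Real.rpow_mul hp1.le,
      show (-1 / γ * γ : ℝ) = -1 by field_simp, Real.rpow_neg_one]
    ring
  -- the transformed potential
  have hdTT : deriv (fun s => deriv (deriv T) s / deriv T s) (S τ)
      = (deriv (deriv (deriv T)) (S τ) * deriv T (S τ) - deriv (deriv T) (S τ) * deriv (deriv T) (S τ)) / deriv T (S τ) ^ 2 := (hdT''.div hdT' hp1.ne').deriv
  have hdXs : deriv (fun s => deriv X s / Real.sqrt (deriv T s)) (S τ)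
      = (deriv (deriv X) (S τ) * Real.sqrt (deriv T (S τ)) - deriv X (S τ) * (1 / (2 * Real.sqrt (deriv T (S τ))) * deriv (deriv T) (S τ))) / Real.sqrt (deriv T (S τ)) ^ 2 := (hdX'.div hdsqrt hs0.ne').deriv
  have hVt2 := hVt (S τ) (((ξ - X (S τ)) / Real.sqrt (deriv T (S τ))) : ℝ)
  rw [hS2 τ, div_mul_cancel₀ _ hs0.ne', sub_add_cancel, hdTT, hdXs] at hVt2
  -- the original PDE at (S τ, XV)
  have key : Complex.I * deriv (fun t' => ψ t' ((ξ - X (S τ)) / Real.sqrt (deriv T (S τ)))) (S τ) + deriv (deriv (fun y => ψ (S τ) y)) ((ξ - X (S τ)) / Real.sqrt (deriv T (S τ))) + ((‖ψ (S τ) ((ξ - X (S τ)) / Real.sqrt (deriv T (S τ)))‖ ^ γ : ℝ) : ℂ) * ψ (S τ) ((ξ - X (S τ)) / Real.sqrt (deriv T (S τ))) + V (S τ) ((ξ - X (S τ)) / Real.sqrt (deriv T (S τ))) * ψ (S τ) ((ξ - X (S τ)) / Real.sqrt (deriv T (S τ))) = 0 :=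
    hψ.2 ((S τ), (((ξ - X (S τ)) / Real.sqrt (deriv T (S τ))) : ℝ)) (Set.mem_univ _)
  -- relations for the final algebra
  have hrel1 : ((deriv T (S τ) ^ (-1 / γ - 1) : ℝ) : ℂ) = ((deriv T (S τ) ^ (-1 / γ) : ℝ) : ℂ) * ((deriv T (S τ) : ℝ) : ℂ)⁻¹ := by
    rw [show (deriv T (S τ) ^ (-1 / γ - 1) : ℝ) = (deriv T (S τ) ^ (-1 / γ)) / (deriv T (S τ)) from Real.rpow_sub_one hp1.ne' _]
    push_cast
    ring
  have hrel3 : (((deriv T (S τ)) : ℝ) : ℂ) = (((Real.sqrt (deriv T (S τ))) : ℝ) : ℂ) * (((Real.sqrt (deriv T (S τ))) : ℝ) : ℂ) := by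
    exact_mod_cast congrArg (fun u : ℝ => (u : ℂ)) (Real.mul_self_sqrt hp1.le).symm
  have hrel2 : (((deriv T (S τ)) : ℝ) : ℂ)⁻¹ = (((Real.sqrt (deriv T (S τ))) : ℝ) : ℂ)⁻¹ * (((Real.sqrt (deriv T (S τ))) : ℝ) : ℂ)⁻¹ := by
    rw [hrel3, mul_inv]
  have hrel4 : (((Real.sqrt (deriv T (S τ))) : ℝ) : ℂ) * (((Real.sqrt (deriv T (S τ))) : ℝ) : ℂ)⁻¹ = 1 :=
    mul_inv_cancel₀ (by exact_mod_cast hs0.ne')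
  have hrel5 : (γ : ℂ) * (γ : ℂ)⁻¹ = 1 := mul_inv_cancel₀ (by exact_mod_cast hγ)
  -- final assembly
  rw [hD1, hD2, habsR, hVt2, hval]
  set Ec : ℂ := Complex.exp (Complex.I * (((deriv (deriv T) (S τ) * ((ξ - X (S τ)) / Real.sqrt (deriv T (S τ))) ^ 2 / (8 * deriv T (S τ)) + deriv X (S τ) * ((ξ - X (S τ)) / Real.sqrt (deriv T (S τ))) / (2 * Real.sqrt (deriv T (S τ))) + Ψ (S τ)) : ℝ) : ℂ)) with hEcdef
  simp only [Complex.real_smul]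
  push_cast
  linear_combination FA (γ : ℂ) ((deriv T (S τ) : ℝ) : ℂ) ((deriv (deriv T) (S τ) : ℝ) : ℂ) ((deriv (deriv (deriv T)) (S τ) : ℝ) : ℂ)
    ((deriv X (S τ) : ℝ) : ℂ) ((deriv (deriv X) (S τ) : ℝ) : ℂ) ((deriv Ψ (S τ) : ℝ) : ℂ) ((Real.sqrt (deriv T (S τ)) : ℝ) : ℂ)
    ((ξ : ℂ) - ((X (S τ) : ℝ) : ℂ)) ((deriv T (S τ) ^ (-1 / γ) : ℝ) : ℂ) ((deriv T (S τ) ^ (-1 / γ - 1) : ℝ) : ℂ)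
    ((‖ψ (S τ) ((ξ - X (S τ)) / Real.sqrt (deriv T (S τ)))‖ ^ γ : ℝ) : ℂ) Complex.I Ec (ψ (S τ) ((ξ - X (S τ)) / Real.sqrt (deriv T (S τ)))) (deriv (fun t' => ψ t' ((ξ - X (S τ)) / Real.sqrt (deriv T (S τ)))) (S τ)) (deriv (fun y => ψ (S τ) y) ((ξ - X (S τ)) / Real.sqrt (deriv T (S τ)))) (deriv (deriv (fun y => ψ (S τ) y)) ((ξ - X (S τ)) / Real.sqrt (deriv T (S τ)))) (V (S τ) ((ξ - X (S τ)) / Real.sqrt (deriv T (S τ))))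
    Complex.I_mul_I hrel1 hrel2 hrel3 hrel4 hrel5 key
end

section
/- (The discrete equivalence transformation τ on the potentials i·ν/t.) Let γ ≠ 0 be a real constant, γ̂ = (4−γ)/γ, and ν ∈ ℝ. Let ψ be a smooth solution of NLS(γ, V) on the domain (0,∞)×ℝ, where V(t,x) = i·ν/t. Then the function φ, defined for s < 0 and y ∈ ℝ by φ(s,y) = (−1/s)^(2/γ) · ψ(−1/s, −y/s) · exp( i·y²/(4·s) ), is a smooth solution of NLS(γ, Ṽ) on (−∞,0)×ℝ, where Ṽ(s,y) = i·(γ̂/2 − ν)/s. -/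
set_option maxHeartbeats 1000000 in
private lemma re_I_mul_ofReal (r : ℝ) : (Complex.I * (r : ℂ)).re = 0 := by simp

set_option maxHeartbeats 4000000 in
/-- the discrete equivalence transformation `τ` on the potentials `iν/t`. -/
theorem stmt_6 (γ : ℝ) (hγ : γ ≠ 0) (ν : ℝ) (ψ : ℝ → ℝ → ℂ)
    (hψ : SolvesNLS γ (fun t _ => Complex.I * ((ν / t : ℝ) : ℂ)) ψ
      {p : ℝ × ℝ | 0 < p.1}) :
    SolvesNLS γ (fun s _ => Complex.I * (((((4 - γ) / γ) / 2 - ν) / s : ℝ) : ℂ))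
      (fun s y => (((-1 / s) ^ (2 / γ) : ℝ) : ℂ) * ψ (-1 / s) (-y / s) *
        Complex.exp (Complex.I * ((y ^ 2 / (4 * s) : ℝ) : ℂ)))
      {p : ℝ × ℝ | p.1 < 0} := by
  obtain ⟨hsm, heq⟩ := hψ
  have hΩ : IsOpen {p : ℝ × ℝ | 0 < p.1} := isOpen_lt continuous_const continuous_fst
  constructor
  · -- smoothness
    intro p hp
    have hs : p.1 < 0 := hp
    have hs0 : p.1 ≠ 0 := ne_of_lt hs
    have ht0 : (0:ℝ) < -1 / p.1 := div_pos_of_neg_of_neg (by norm_num) hs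
    have hneg : ContDiffAt ℝ (⊤ : ℕ∞) (fun q : ℝ × ℝ => -1 / q.1) p :=
      contDiffAt_const.div contDiffAt_fst hs0
    have hA : ContDiffAt ℝ (⊤ : ℕ∞) (fun q : ℝ × ℝ => ((-1 / q.1) ^ (2/γ) : ℝ)) p :=
      hneg.rpow_const_of_ne (ne_of_gt ht0)
    have hAc : ContDiffAt ℝ (⊤ : ℕ∞) (fun q : ℝ × ℝ => (((-1 / q.1) ^ (2/γ) : ℝ) : ℂ)) p :=
      Complex.ofRealCLM.contDiff.contDiffAt.comp p hA
    have hmem : ((-1 / p.1, -p.2 / p.1) : ℝ × ℝ) ∈ {p : ℝ × ℝ | 0 < p.1} := ht0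
    have hψc : ContDiffAt ℝ (⊤ : ℕ∞) (fun q : ℝ × ℝ => ψ (-1 / q.1) (-q.2 / q.1)) p :=
      (hsm.contDiffAt (hΩ.mem_nhds hmem)).comp (f := fun q : ℝ × ℝ => (-1 / q.1, -q.2 / q.1)) p
        (hneg.prodMk ((contDiffAt_snd.neg).div contDiffAt_fst hs0))
    have hec : ContDiffAt ℝ (⊤ : ℕ∞)
        (fun q : ℝ × ℝ => Complex.exp (Complex.I * ((q.2 ^ 2 / (4 * q.1) : ℝ) : ℂ))) p := by
      have h1 : ContDiffAt ℝ (⊤ : ℕ∞) (fun q : ℝ × ℝ => (q.2 ^ 2 / (4 * q.1) : ℝ)) p :=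
        (contDiffAt_snd.pow 2).div (contDiffAt_const.mul contDiffAt_fst)
          (by simpa using hs0)
      have h2 : ContDiffAt ℝ (⊤ : ℕ∞)
          (fun q : ℝ × ℝ => Complex.I * ((q.2 ^ 2 / (4 * q.1) : ℝ) : ℂ)) p :=
        contDiffAt_const.mul (Complex.ofRealCLM.contDiff.contDiffAt.comp p h1)
      exact Complex.contDiff_exp.contDiffAt.comp p h2
    exact ((hAc.mul hψc).mul hec).contDiffWithinAt
  · rintro ⟨s, y⟩ hp
    simp only [Set.mem_setOf_eq] at hp ⊢

    have hs0 : s ≠ 0 := ne_of_lt hp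
    have ht0 : (0:ℝ) < -1 / s := div_pos_of_neg_of_neg (by norm_num) hp
    have hmem : ((-1/s, -y/s) : ℝ × ℝ) ∈ {p : ℝ × ℝ | 0 < p.1} := ht0
    have hFd : DifferentiableAt ℝ (fun p : ℝ × ℝ => ψ p.1 p.2) (-1/s, -y/s) :=
      (hsm.contDiffAt (hΩ.mem_nhds hmem)).differentiableAt (by simp)
    have hF : HasFDerivAt (fun p : ℝ × ℝ => ψ p.1 p.2)
        (fderiv ℝ (fun p : ℝ × ℝ => ψ p.1 p.2) (-1/s, -y/s)) (-1/s, -y/s) := hFd.hasFDerivAt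
    set L := fderiv ℝ (fun p : ℝ × ℝ => ψ p.1 p.2) (-1/s, -y/s) with hL_def
    -- partial derivative in t
    have hPt : HasDerivAt (fun t' => ψ t' (-y/s)) (L (1, 0)) (-1/s) := by
      have h := hF.comp_hasDerivAt (-1/s)
        ((hasDerivAt_id (-1/s)).prodMk (hasDerivAt_const (-1/s) (-y/s)))
      simpa [Function.comp_def] using h
    -- smoothness of the line x ↦ ψ t x
    have hlineAt : ∀ x' : ℝ, ContDiffAt ℝ (⊤ : ℕ∞) (fun x'' : ℝ => ψ (-1/s) x'') x' := by
      intro x'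
      have hmem' : ((-1/s, x') : ℝ × ℝ) ∈ {p : ℝ × ℝ | 0 < p.1} := ht0
      exact (hsm.contDiffAt (hΩ.mem_nhds hmem')).comp x' (contDiffAt_const.prodMk contDiffAt_id)
    have hlineC : ContDiff ℝ ((⊤ : ℕ∞) : WithTop ℕ∞) (fun x'' : ℝ => ψ (-1/s) x'') :=
      (contDiff_iff_contDiffAt.2 hlineAt).of_le (by simp)
    have hdiff1 : Differentiable ℝ (fun x'' : ℝ => ψ (-1/s) x'') :=
      (contDiff_infty_iff_deriv.1 hlineC).1
    have hdiff2 : Differentiable ℝ (deriv (fun x'' : ℝ => ψ (-1/s) x'')) :=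
      (contDiff_infty_iff_deriv.1 (contDiff_infty_iff_deriv.1 hlineC).2).1
    -- partial derivative in x at the point
    have hPx : HasDerivAt (fun x'' : ℝ => ψ (-1/s) x'') (L (0, 1)) (-y/s) := by
      have h := hF.comp_hasDerivAt (-y/s)
        ((hasDerivAt_const (-y/s) (-1/s)).prodMk (hasDerivAt_id (-y/s)))
      simpa [Function.comp_def] using h
    -- the PDE at the transformed point
    have hPDE := heq (-1/s, -y/s) hmem
    simp only at hPDE
    rw [hPt.deriv] at hPDE
    have hνt : (ν / (-1/s) : ℝ) = -(ν * s) := by field_simp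
    rw [hνt] at hPDE
    have hsub : deriv (deriv (fun x'' : ℝ => ψ (-1/s) x'')) (-y/s)
        = -(Complex.I * L (1, 0)) - ((‖ψ (-1/s) (-y/s)‖ ^ γ : ℝ) : ℂ) * ψ (-1/s) (-y/s)
          + Complex.I * ((ν * s : ℝ) : ℂ) * ψ (-1/s) (-y/s) := by
      push_cast at hPDE ⊢
      linear_combination hPDE
    -- derivative in s of the transformed function
    have h_inv : HasDerivAt (fun s' : ℝ => -1 / s') ((s^2)⁻¹) s := by
      have hfe : (fun s' : ℝ => -1 / s') = fun s' : ℝ => -s'⁻¹ := by funext s'; ring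
      rw [hfe, show (s^2)⁻¹ = -(-(s^2)⁻¹) by ring]
      exact (hasDerivAt_inv hs0).neg
    have h_x : HasDerivAt (fun s' : ℝ => -y / s') (y * (s^2)⁻¹) s := by
      have hfe : (fun s' : ℝ => -y / s') = fun s' : ℝ => y * (-1 / s') := by funext s'; ring
      rw [hfe]
      simpa using h_inv.const_mul y
    have hcurve : HasDerivAt (fun s' : ℝ => ψ (-1/s') (-y/s')) (L ((s^2)⁻¹, y * (s^2)⁻¹)) s := by
      have h := hF.comp_hasDerivAt s (h_inv.prodMk h_x)
      simpa [Function.comp_def] using h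
    have hLdec : L ((s^2)⁻¹, y * (s^2)⁻¹)
        = ((s^2)⁻¹ : ℝ) • L (1, 0) + ((y * (s^2)⁻¹ : ℝ)) • L (0, 1) := by
      rw [← map_smul, ← map_smul, ← map_add]
      congr 1
      simp [Prod.ext_iff]
    have hA_s : HasDerivAt (fun s' : ℝ => ((-1/s') ^ (2/γ) : ℝ))
        ((2/γ) * (-1/s) ^ (2/γ - 1) * (s^2)⁻¹) s := by
      have h0 : HasDerivAt (fun u : ℝ => u ^ (2/γ)) ((2/γ) * (-1/s) ^ (2/γ - 1)) (-1/s) :=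
        Real.hasDerivAt_rpow_const (Or.inl (ne_of_gt ht0))
      have h := h0.comp s h_inv
      simpa [Function.comp_def] using h
    have hr_s : HasDerivAt (fun s' : ℝ => y^2 / (4 * s')) ((y^2/4) * -(s^2)⁻¹) s := by
      have hfe : (fun s' : ℝ => y^2 / (4 * s')) = fun s' : ℝ => (y^2/4) * s'⁻¹ := by
        funext s'; ring
      rw [hfe]
      exact (hasDerivAt_inv hs0).const_mul (y^2/4)
    have hE_s : HasDerivAt
        (fun s' : ℝ => Complex.exp (Complex.I * ((y^2/(4*s') : ℝ) : ℂ)))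
        (Complex.exp (Complex.I * ((y^2/(4*s) : ℝ) : ℂ)) *
          (Complex.I * (((y^2/4) * -(s^2)⁻¹ : ℝ) : ℂ))) s :=
      ((hr_s.ofReal_comp).const_mul Complex.I).cexp
    have hD1 : HasDerivAt
        (fun s' : ℝ => (((-1/s') ^ (2/γ) : ℝ) : ℂ) * ψ (-1/s') (-y/s') *
          Complex.exp (Complex.I * ((y^2/(4*s') : ℝ) : ℂ)))
        (((((2/γ) * (-1/s) ^ (2/γ - 1) * (s^2)⁻¹ : ℝ) : ℂ) * ψ (-1/s) (-y/s)
          + (((-1/s) ^ (2/γ) : ℝ) : ℂ) * L ((s^2)⁻¹, y * (s^2)⁻¹)) *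
          Complex.exp (Complex.I * ((y^2/(4*s) : ℝ) : ℂ))
          + (((-1/s) ^ (2/γ) : ℝ) : ℂ) * ψ (-1/s) (-y/s) *
            (Complex.exp (Complex.I * ((y^2/(4*s) : ℝ) : ℂ)) *
              (Complex.I * (((y^2/4) * -(s^2)⁻¹ : ℝ) : ℂ)))) s :=
      (hA_s.ofReal_comp.mul hcurve).mul hE_s
    -- derivative in y (as a function of y)
    have hinner1 : ∀ y' : ℝ, HasDerivAt (fun y'' : ℝ => -y'' / s) (-s⁻¹) y' := by
      intro y'
      have hfe : (fun y'' : ℝ => -y'' / s) = fun y'' : ℝ => y'' * -s⁻¹ := by funext y''; ring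
      rw [hfe]
      simpa using (hasDerivAt_id y').mul_const (-s⁻¹)
    have hψx_at : ∀ x' : ℝ, HasDerivAt (fun x'' : ℝ => ψ (-1/s) x'')
        (deriv (fun x'' : ℝ => ψ (-1/s) x'') x') x' := fun x' => (hdiff1 x').hasDerivAt
    have hψcomp_y : ∀ y' : ℝ, HasDerivAt (fun y'' : ℝ => ψ (-1/s) (-y''/s))
        ((-s⁻¹) • deriv (fun x'' : ℝ => ψ (-1/s) x'') (-y'/s)) y' := by
      intro y'
      have h := HasDerivAt.scomp y' (hψx_at (-y'/s)) (hinner1 y')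
      simpa [Function.comp_def] using h
    have hE_y : ∀ y' : ℝ, HasDerivAt
        (fun y'' : ℝ => Complex.exp (Complex.I * ((y''^2/(4*s) : ℝ) : ℂ)))
        (Complex.exp (Complex.I * ((y'^2/(4*s) : ℝ) : ℂ)) *
          (Complex.I * ((2*y'/(4*s) : ℝ) : ℂ))) y' := by
      intro y'
      have h1 : HasDerivAt (fun y'' : ℝ => y''^2/(4*s)) (2*y'/(4*s)) y' := by
        have := (hasDerivAt_pow 2 y').div_const (4*s)
        simpa using this
      exact ((h1.ofReal_comp).const_mul Complex.I).cexp
    have hφy : ∀ y' : ℝ, HasDerivAt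
        (fun y'' : ℝ => (((-1/s) ^ (2/γ) : ℝ) : ℂ) * ψ (-1/s) (-y''/s) *
          Complex.exp (Complex.I * ((y''^2/(4*s) : ℝ) : ℂ)))
        ((((-1/s) ^ (2/γ) : ℝ) : ℂ) *
            ((-s⁻¹) • deriv (fun x'' : ℝ => ψ (-1/s) x'') (-y'/s)) *
            Complex.exp (Complex.I * ((y'^2/(4*s) : ℝ) : ℂ))
          + (((-1/s) ^ (2/γ) : ℝ) : ℂ) * ψ (-1/s) (-y'/s) *
            (Complex.exp (Complex.I * ((y'^2/(4*s) : ℝ) : ℂ)) *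
              (Complex.I * ((2*y'/(4*s) : ℝ) : ℂ)))) y' :=
      fun y' => ((hψcomp_y y').const_mul _).mul (hE_y y')
    have hgd : deriv (fun y'' : ℝ => (((-1/s) ^ (2/γ) : ℝ) : ℂ) * ψ (-1/s) (-y''/s) *
          Complex.exp (Complex.I * ((y''^2/(4*s) : ℝ) : ℂ)))
        = fun y' : ℝ => (((-1/s) ^ (2/γ) : ℝ) : ℂ) *
            ((-s⁻¹) • deriv (fun x'' : ℝ => ψ (-1/s) x'') (-y'/s)) *
            Complex.exp (Complex.I * ((y'^2/(4*s) : ℝ) : ℂ))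
          + (((-1/s) ^ (2/γ) : ℝ) : ℂ) * ψ (-1/s) (-y'/s) *
            (Complex.exp (Complex.I * ((y'^2/(4*s) : ℝ) : ℂ)) *
              (Complex.I * ((2*y'/(4*s) : ℝ) : ℂ))) :=
      funext fun y' => (hφy y').deriv
    -- second derivative in y
    have ha : HasDerivAt (fun y' : ℝ => deriv (fun x'' : ℝ => ψ (-1/s) x'') (-y'/s))
        ((-s⁻¹) • deriv (deriv (fun x'' : ℝ => ψ (-1/s) x'')) (-y/s)) y := by
      have h := HasDerivAt.scomp y ((hdiff2 (-y/s)).hasDerivAt) (hinner1 y)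
      simpa [Function.comp_def] using h
    have hw1 : HasDerivAt (fun y' : ℝ => 2*y'/(4*s)) (2*1/(4*s)) y :=
      ((hasDerivAt_id y).const_mul 2).div_const (4*s)
    have hG : HasDerivAt
        (fun y' : ℝ => (((-1/s) ^ (2/γ) : ℝ) : ℂ) *
            ((-s⁻¹) • deriv (fun x'' : ℝ => ψ (-1/s) x'') (-y'/s)) *
            Complex.exp (Complex.I * ((y'^2/(4*s) : ℝ) : ℂ))
          + (((-1/s) ^ (2/γ) : ℝ) : ℂ) * ψ (-1/s) (-y'/s) *
            (Complex.exp (Complex.I * ((y'^2/(4*s) : ℝ) : ℂ)) *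
              (Complex.I * ((2*y'/(4*s) : ℝ) : ℂ))))
        (((((-1/s) ^ (2/γ) : ℝ) : ℂ) *
            ((-s⁻¹) • ((-s⁻¹) • deriv (deriv (fun x'' : ℝ => ψ (-1/s) x'')) (-y/s))) *
            Complex.exp (Complex.I * ((y^2/(4*s) : ℝ) : ℂ))
          + (((-1/s) ^ (2/γ) : ℝ) : ℂ) *
            ((-s⁻¹) • deriv (fun x'' : ℝ => ψ (-1/s) x'') (-y/s)) *
            (Complex.exp (Complex.I * ((y^2/(4*s) : ℝ) : ℂ)) *
              (Complex.I * ((2*y/(4*s) : ℝ) : ℂ))))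
          + (((((-1/s) ^ (2/γ) : ℝ) : ℂ) * ((-s⁻¹) • deriv (fun x'' : ℝ => ψ (-1/s) x'') (-y/s))) *
              (Complex.exp (Complex.I * ((y^2/(4*s) : ℝ) : ℂ)) *
                (Complex.I * ((2*y/(4*s) : ℝ) : ℂ)))
            + (((-1/s) ^ (2/γ) : ℝ) : ℂ) * ψ (-1/s) (-y/s) *
              ((Complex.exp (Complex.I * ((y^2/(4*s) : ℝ) : ℂ)) *
                  (Complex.I * ((2*y/(4*s) : ℝ) : ℂ))) * (Complex.I * ((2*y/(4*s) : ℝ) : ℂ))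
                + Complex.exp (Complex.I * ((y^2/(4*s) : ℝ) : ℂ)) *
                  (Complex.I * ((2*1/(4*s) : ℝ) : ℂ))))) y := by
      exact (((ha.const_smul (-s⁻¹)).const_mul _).mul (hE_y y)).add
        (((hψcomp_y y).const_mul _).mul
          ((hE_y y).mul ((hw1.ofReal_comp).const_mul Complex.I)))
    -- the modulus computation
    have hApos : (0:ℝ) < (-1/s) ^ (2/γ) := Real.rpow_pos_of_pos ht0 _
    have hAγ : (((-1/s) ^ (2/γ) : ℝ)) ^ γ = (s^2)⁻¹ := by
      rw [← Real.rpow_mul (le_of_lt ht0), div_mul_cancel₀ _ hγ,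
        show ((2:ℝ)) = ((2:ℕ):ℝ) by norm_num, Real.rpow_natCast, div_pow]
      norm_num
    have habs : ‖(((-1/s) ^ (2/γ) : ℝ) : ℂ) * ψ (-1/s) (-y/s) *
          Complex.exp (Complex.I * ((y^2/(4*s) : ℝ) : ℂ))‖ ^ γ
        = (s^2)⁻¹ * ‖ψ (-1/s) (-y/s)‖ ^ γ := by
      rw [norm_mul, norm_mul, Complex.norm_real, Real.norm_eq_abs, Complex.norm_exp,
        re_I_mul_ofReal (y^2/(4*s)),
        Real.exp_zero, mul_one, abs_of_pos hApos,
        Real.mul_rpow (le_of_lt hApos) (norm_nonneg _), hAγ]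
    have hA2 : ((-1/s) ^ (2/γ - 1) : ℝ) = (-1/s) ^ (2/γ) * -s := by
      rw [Real.rpow_sub ht0, Real.rpow_one]
      field_simp
    -- put everything together
    rw [hD1.deriv, hgd, hG.deriv, hLdec, hPx.deriv, habs, hsub, hA2]
    have hsc : (s:ℂ) ≠ 0 := Complex.ofReal_ne_zero.2 hs0
    have hγc : (γ:ℂ) ≠ 0 := Complex.ofReal_ne_zero.2 hγ
    clear_value L
    clear hD1 hgd hG hLdec hPx habs hsub hA2 hPDE hPt hF hFd hcurve hE_s hA_s hr_s
      hψcomp_y hE_y hφy ha hw1 hψx_at hinner1 h_inv h_x hlineAt hlineC hdiff1 hdiff2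
      heq hsm hL_def hνt
    simp only [Complex.real_smul]
    generalize hP : ψ (-1 / s) (-y / s) = P
    generalize hE : Complex.exp (Complex.I * ((y ^ 2 / (4 * s) : ℝ) : ℂ)) = E
    generalize hR : ‖P‖ ^ γ = R
    generalize hA : ((-1 / s) ^ (2 / γ) : ℝ) = A
    generalize hL1 : L (1, 0) = Pt
    generalize hL2 : L (0, 1) = Px
    push_cast
    ring_nf
    field_simp [hsc, hγc]
    ring_nf
end

section
/- (Pseudoconformal invariance with inverse-square potential in the critical case γ = 4.) Let α, β ∈ ℝ and let ψ be a smooth solution of NLS(4, V) on ℝ×(ℝ∖{0}), where V(t,x) = (α + i·β)/x². Then for every ε ∈ ℝ the function φ(t,x) = (1+ε·t)^(−1/2) · ψ( t/(1+ε·t), x/(1+ε·t) ) · exp( i·ε·x²/(4·(1+ε·t)) ) is a smooth solution of the same equation NLS(4, V) on the domain {(t,x) : 1 + ε·t > 0, x ≠ 0}. -/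
set_option maxHeartbeats 1000000 in
/-- pseudoconformal invariance with inverse-square potential, `γ = 4`. -/
theorem stmt_10 (α β : ℝ) (ψ : ℝ → ℝ → ℂ)
    (hψ : SolvesNLS 4 (fun _ x => ((α : ℂ) + Complex.I * (β : ℂ)) / ((x : ℂ)) ^ 2) ψ
      {p : ℝ × ℝ | p.2 ≠ 0}) (ε : ℝ) :
    SolvesNLS 4 (fun _ x => ((α : ℂ) + Complex.I * (β : ℂ)) / ((x : ℂ)) ^ 2)
      (fun t x => (((1 + ε * t) ^ (-(1 : ℝ) / 2) : ℝ) : ℂ) *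
        ψ (t / (1 + ε * t)) (x / (1 + ε * t)) *
        Complex.exp (Complex.I * ((ε * x ^ 2 / (4 * (1 + ε * t)) : ℝ) : ℂ)))
      {p : ℝ × ℝ | 0 < 1 + ε * p.1 ∧ p.2 ≠ 0} := by
  obtain ⟨hsm, heq⟩ := hψ
  have hU : IsOpen {p : ℝ × ℝ | p.2 ≠ 0} :=
    isOpen_compl_singleton.preimage continuous_snd
  constructor
  · -- smoothness
    intro p hp
    obtain ⟨hp1, hp2⟩ := hp
    apply ContDiffAt.contDiffWithinAt
    have hne : 1 + ε * p.1 ≠ 0 := ne_of_gt hp1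
    have h1 : ContDiffAt ℝ (⊤ : ℕ∞) (fun q : ℝ × ℝ => 1 + ε * q.1) p := by fun_prop
    have hr : ContDiffAt ℝ (⊤ : ℕ∞)
        (fun q : ℝ × ℝ => (((1 + ε * q.1) ^ (-(1 : ℝ) / 2) : ℝ) : ℂ)) p := by
      exact Complex.ofRealCLM.contDiff.contDiffAt.comp p
        (ContDiffAt.comp (g := fun z : ℝ => z ^ (-(1 : ℝ) / 2)) p
          (Real.contDiffAt_rpow_const_of_ne hne) h1)
    have hmid : ContDiffAt ℝ (⊤ : ℕ∞)
        (fun q : ℝ × ℝ => ψ (q.1 / (1 + ε * q.1)) (q.2 / (1 + ε * q.1))) p := by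
      have hin : ContDiffAt ℝ (⊤ : ℕ∞)
          (fun q : ℝ × ℝ => ((q.1 / (1 + ε * q.1), q.2 / (1 + ε * q.1)) : ℝ × ℝ)) p :=
        (contDiffAt_fst.div h1 hne).prodMk (contDiffAt_snd.div h1 hne)
      have hmem : ((p.1 / (1 + ε * p.1), p.2 / (1 + ε * p.1)) : ℝ × ℝ) ∈
          {p : ℝ × ℝ | p.2 ≠ 0} := div_ne_zero hp2 hne
      exact (hsm.contDiffAt (hU.mem_nhds hmem)).comp p hin
    have hex : ContDiffAt ℝ (⊤ : ℕ∞)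
        (fun q : ℝ × ℝ =>
          Complex.exp (Complex.I * ((ε * q.2 ^ 2 / (4 * (1 + ε * q.1)) : ℝ) : ℂ))) p := by
      have h4 : (4 : ℝ) * (1 + ε * p.1) ≠ 0 := mul_ne_zero (by norm_num) hne
      have hinr : ContDiffAt ℝ (⊤ : ℕ∞)
          (fun q : ℝ × ℝ => ε * q.2 ^ 2 / (4 * (1 + ε * q.1))) p :=
        ContDiffAt.div (by fun_prop) (by fun_prop) h4
      exact Complex.contDiff_exp.contDiffAt.comp p
        (contDiffAt_const.mul (Complex.ofRealCLM.contDiff.contDiffAt.comp p hinr))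
    exact (hr.mul hmid).mul hex
  · rintro ⟨t, x⟩ ⟨ht, hx⟩
    dsimp only at ht hx ⊢
    set a : ℝ := 1 + ε * t with ha_def
    have ha : 0 < a := ht
    have hane : a ≠ 0 := ne_of_gt ha
    set y : ℝ := x / a with hy_def
    set s : ℝ := t / a with hs_def
    set r : ℝ := a ^ (-(1 : ℝ) / 2) with hr_def
    have hy : y ≠ 0 := div_ne_zero hx hane
    have hrpos : 0 < r := Real.rpow_pos_of_pos ha _
    have hr2 : r ^ 2 = a⁻¹ := by
      rw [hr_def, ← Real.rpow_natCast (a ^ (-(1 : ℝ) / 2)) 2, ← Real.rpow_mul ha.le]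
      norm_num [Real.rpow_neg_one]
    have hr32 : a ^ (-(1 : ℝ) / 2 - 1) = r / a := by
      rw [show (-(1 : ℝ) / 2 - 1) = (-(1 : ℝ) / 2) + (-1) by ring, Real.rpow_add ha,
        Real.rpow_neg_one, hr_def]
      ring
    -- data about ψ at (s, y)
    have hUm : ((s, y) : ℝ × ℝ) ∈ {p : ℝ × ℝ | p.2 ≠ 0} := hy
    have hC : ContDiffAt ℝ (⊤ : ℕ∞) (fun p : ℝ × ℝ => ψ p.1 p.2) (s, y) :=
      hsm.contDiffAt (hU.mem_nhds hUm)
    have hL : HasFDerivAt (fun p : ℝ × ℝ => ψ p.1 p.2)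
        (fderiv ℝ (fun p : ℝ × ℝ => ψ p.1 p.2) (s, y)) (s, y) :=
      (hC.differentiableAt (by simp)).hasFDerivAt
    set L := fderiv ℝ (fun p : ℝ × ℝ => ψ p.1 p.2) (s, y) with hL_def
    have hA : HasDerivAt (fun τ => ψ τ y) (L (1, 0)) s := by
      have := hL.comp_hasDerivAt s ((hasDerivAt_id s).prodMk (hasDerivAt_const s y))
      exact this
    have hB : HasDerivAt (fun ξ => ψ s ξ) (L (0, 1)) y := by
      have := hL.comp_hasDerivAt y ((hasDerivAt_const y s).prodMk (hasDerivAt_id y))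
      exact this
    have hg : ContDiffOn ℝ (⊤ : ℕ∞) (fun ξ => ψ s ξ) {ξ : ℝ | ξ ≠ 0} := by
      have hcurve : ContDiff ℝ (⊤ : ℕ∞) (fun ξ : ℝ => ((s, ξ) : ℝ × ℝ)) :=
        contDiff_const.prodMk contDiff_id
      exact hsm.comp hcurve.contDiffOn (fun ξ hξ => hξ)
    have hgopen : IsOpen {ξ : ℝ | ξ ≠ 0} := isOpen_compl_singleton
    have hg' : ContDiffOn ℝ (⊤ : ℕ∞) (deriv (fun ξ => ψ s ξ)) {ξ : ℝ | ξ ≠ 0} :=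
      hg.deriv_of_isOpen hgopen (by simp)
    have hD2 : HasDerivAt (deriv (fun ξ => ψ s ξ)) (deriv (deriv (fun ξ => ψ s ξ)) y) y :=
      ((hg'.contDiffAt (hgopen.mem_nhds hy)).differentiableAt (by simp)).hasDerivAt
    -- time derivative
    have hlin : HasDerivAt (fun τ : ℝ => 1 + ε * τ) ε t := by
      simpa using ((hasDerivAt_id t).const_mul ε).const_add 1
    have hc : HasDerivAt (fun τ : ℝ => (((1 + ε * τ) ^ (-(1 : ℝ) / 2) : ℝ) : ℂ))
        ((-(ε / 2) * (r / a) : ℝ) : ℂ) t := by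
      have h1 : HasDerivAt (fun τ : ℝ => (1 + ε * τ) ^ (-(1 : ℝ) / 2))
          (ε * (-(1 : ℝ) / 2) * a ^ (-(1 : ℝ) / 2 - 1)) t := hlin.rpow_const (Or.inl hane)
      have h2 := h1.ofReal_comp
      convert h2 using 2
      rw [hr32]; ring
    have hσ : HasDerivAt (fun τ : ℝ => τ / (1 + ε * τ)) (1 / a ^ 2) t := by
      have h := (hasDerivAt_id t).div hlin hane
      refine h.congr_deriv ?_
      simp only [id_eq]
      ring
    have hη : HasDerivAt (fun τ : ℝ => x / (1 + ε * τ)) (-(ε * x) / a ^ 2) t := by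
      have h := (hasDerivAt_const t x).div hlin hane
      refine h.congr_deriv ?_
      try simp only [id_eq]
      ring
    have hG : HasDerivAt (fun τ : ℝ => ψ (τ / (1 + ε * τ)) (x / (1 + ε * τ)))
        (((1 / a ^ 2 : ℝ) : ℂ) * L (1, 0) + ((-(ε * x) / a ^ 2 : ℝ) : ℂ) * L (0, 1)) t := by
      have h := hL.comp_hasDerivAt t (hσ.prodMk hη)
      have hv : L (1 / a ^ 2, -(ε * x) / a ^ 2)
          = ((1 / a ^ 2 : ℝ) : ℂ) * L (1, 0) + ((-(ε * x) / a ^ 2 : ℝ) : ℂ) * L (0, 1) := by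
        have hsplit : ((1 / a ^ 2, -(ε * x) / a ^ 2) : ℝ × ℝ)
            = (1 / a ^ 2) • ((1, 0) : ℝ × ℝ) + (-(ε * x) / a ^ 2) • ((0, 1) : ℝ × ℝ) := by
          simp [Prod.ext_iff]
        rw [hsplit, map_add, map_smul, map_smul, Complex.real_smul, Complex.real_smul]
      rw [← hv]
      exact h
    have hEt : HasDerivAt
        (fun τ : ℝ => Complex.exp (Complex.I * ((ε * x ^ 2 / (4 * (1 + ε * τ)) : ℝ) : ℂ)))
        (Complex.exp (Complex.I * ((ε * x ^ 2 / (4 * a) : ℝ) : ℂ)) *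
          (Complex.I * ((-(ε ^ 2 * x ^ 2) / (4 * a ^ 2) : ℝ) : ℂ))) t := by
      have hden : HasDerivAt (fun τ : ℝ => 4 * (1 + ε * τ)) (4 * ε) t := hlin.const_mul 4
      have h4 : (4 : ℝ) * a ≠ 0 := by positivity
      have hinner : HasDerivAt (fun τ : ℝ => ε * x ^ 2 / (4 * (1 + ε * τ)))
          (-(ε ^ 2 * x ^ 2) / (4 * a ^ 2)) t := by
        have h := (hasDerivAt_const t (ε * x ^ 2)).div hden h4
        refine h.congr_deriv ?_
        rw [← ha_def, div_eq_div_iff (pow_ne_zero 2 h4)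
          (mul_ne_zero four_ne_zero (pow_ne_zero 2 hane))]
        ring
      exact ((hinner.ofReal_comp).const_mul Complex.I).cexp
    have hT : HasDerivAt
        (fun τ : ℝ => (((1 + ε * τ) ^ (-(1 : ℝ) / 2) : ℝ) : ℂ) *
          ψ (τ / (1 + ε * τ)) (x / (1 + ε * τ)) *
          Complex.exp (Complex.I * ((ε * x ^ 2 / (4 * (1 + ε * τ)) : ℝ) : ℂ)))
        ((((-(ε / 2) * (r / a) : ℝ) : ℂ) * ψ s y +
            ((r : ℝ) : ℂ) * (((1 / a ^ 2 : ℝ) : ℂ) * L (1, 0) +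
              ((-(ε * x) / a ^ 2 : ℝ) : ℂ) * L (0, 1))) *
          Complex.exp (Complex.I * ((ε * x ^ 2 / (4 * a) : ℝ) : ℂ)) +
          ((r : ℝ) : ℂ) * ψ s y *
            (Complex.exp (Complex.I * ((ε * x ^ 2 / (4 * a) : ℝ) : ℂ)) *
              (Complex.I * ((-(ε ^ 2 * x ^ 2) / (4 * a ^ 2) : ℝ) : ℂ)))) t := by
      exact (hc.mul hG).mul hEt
    -- space derivatives
    have hEx : ∀ ξ : ℝ, HasDerivAt
        (fun ξ' : ℝ => Complex.exp (Complex.I * ((ε * ξ' ^ 2 / (4 * a) : ℝ) : ℂ)))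
        (Complex.exp (Complex.I * ((ε * ξ ^ 2 / (4 * a) : ℝ) : ℂ)) *
          (Complex.I * ((ε * ξ / (2 * a) : ℝ) : ℂ))) ξ := by
      intro ξ
      have hi : HasDerivAt (fun ξ' : ℝ => ε * ξ' ^ 2 / (4 * a)) (ε * ξ / (2 * a)) ξ := by
        have h := ((hasDerivAt_pow 2 ξ).const_mul ε).div_const (4 * a)
        refine h.congr_deriv ?_
        field_simp
        ring
      exact ((hi.ofReal_comp).const_mul Complex.I).cexp
    have hu : ∀ ξ : ℝ, ξ ≠ 0 → HasDerivAt (fun ξ' : ℝ => ψ s (ξ' / a))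
        (((1 / a : ℝ) : ℂ) * deriv (fun b => ψ s b) (ξ / a)) ξ := by
      intro ξ hξ
      have hgd : HasDerivAt (fun b => ψ s b) (deriv (fun b => ψ s b) (ξ / a)) (ξ / a) :=
        ((hg.contDiffAt (hgopen.mem_nhds (div_ne_zero hξ hane))).differentiableAt
          (by simp)).hasDerivAt
      have hin : HasDerivAt (fun ξ' : ℝ => ξ' / a) (1 / a) ξ := (hasDerivAt_id ξ).div_const a
      have h := HasDerivAt.scomp ξ hgd hin
      exact h.congr_deriv (by rw [Complex.real_smul])
    have hSpt : ∀ ξ : ℝ, ξ ≠ 0 → HasDerivAt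
        (fun ξ' : ℝ => ((r : ℝ) : ℂ) * ψ s (ξ' / a) *
          Complex.exp (Complex.I * ((ε * ξ' ^ 2 / (4 * a) : ℝ) : ℂ)))
        (((r : ℝ) : ℂ) * (((1 / a : ℝ) : ℂ) * deriv (fun b => ψ s b) (ξ / a)) *
            Complex.exp (Complex.I * ((ε * ξ ^ 2 / (4 * a) : ℝ) : ℂ)) +
          ((r : ℝ) : ℂ) * ψ s (ξ / a) *
            (Complex.exp (Complex.I * ((ε * ξ ^ 2 / (4 * a) : ℝ) : ℂ)) *
              (Complex.I * ((ε * ξ / (2 * a) : ℝ) : ℂ)))) ξ := by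
      intro ξ hξ
      exact ((hu ξ hξ).const_mul _).mul (hEx ξ)
    have hev : deriv (fun ξ' : ℝ => ((r : ℝ) : ℂ) * ψ s (ξ' / a) *
          Complex.exp (Complex.I * ((ε * ξ' ^ 2 / (4 * a) : ℝ) : ℂ)))
        =ᶠ[nhds x] fun ξ : ℝ =>
          ((r : ℝ) : ℂ) * (((1 / a : ℝ) : ℂ) * deriv (fun b => ψ s b) (ξ / a)) *
            Complex.exp (Complex.I * ((ε * ξ ^ 2 / (4 * a) : ℝ) : ℂ)) +
          ((r : ℝ) : ℂ) * ψ s (ξ / a) *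
            (Complex.exp (Complex.I * ((ε * ξ ^ 2 / (4 * a) : ℝ) : ℂ)) *
              (Complex.I * ((ε * ξ / (2 * a) : ℝ) : ℂ))) := by
      filter_upwards [isOpen_compl_singleton.mem_nhds (by simpa using hx :
        x ∈ ({0}ᶜ : Set ℝ))] with ξ hξ
      exact (hSpt ξ (by simpa using hξ)).deriv
    have hw : HasDerivAt (fun ξ : ℝ => Complex.I * ((ε * ξ / (2 * a) : ℝ) : ℂ))
        (Complex.I * ((ε / (2 * a) : ℝ) : ℂ)) x := by
      have hi : HasDerivAt (fun ξ : ℝ => ε * ξ / (2 * a)) (ε / (2 * a)) x := by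
        have h := ((hasDerivAt_id x).const_mul ε).div_const (2 * a)
        refine h.congr_deriv ?_
        try simp only [id_eq]
        ring
      exact (hi.ofReal_comp).const_mul Complex.I
    have hd1 : HasDerivAt (fun ξ : ℝ => deriv (fun b => ψ s b) (ξ / a))
        (((1 / a : ℝ) : ℂ) * deriv (deriv (fun b => ψ s b)) y) x := by
      have hin : HasDerivAt (fun ξ' : ℝ => ξ' / a) (1 / a) x := (hasDerivAt_id x).div_const a
      have h := HasDerivAt.scomp x hD2 hin
      exact h.congr_deriv (by rw [Complex.real_smul])
    have hd2x : deriv (deriv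
        (fun ξ' : ℝ => ((r : ℝ) : ℂ) * ψ s (ξ' / a) *
          Complex.exp (Complex.I * ((ε * ξ' ^ 2 / (4 * a) : ℝ) : ℂ)))) x
        = (((r : ℝ) : ℂ) * (((1 / a : ℝ) : ℂ) * (((1 / a : ℝ) : ℂ) *
              deriv (deriv (fun b => ψ s b)) y)) *
            Complex.exp (Complex.I * ((ε * x ^ 2 / (4 * a) : ℝ) : ℂ)) +
          ((r : ℝ) : ℂ) * (((1 / a : ℝ) : ℂ) * deriv (fun b => ψ s b) y) *
            (Complex.exp (Complex.I * ((ε * x ^ 2 / (4 * a) : ℝ) : ℂ)) *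
              (Complex.I * ((ε * x / (2 * a) : ℝ) : ℂ)))) +
          ((((r : ℝ) : ℂ) * (((1 / a : ℝ) : ℂ) * deriv (fun b => ψ s b) y)) *
            (Complex.exp (Complex.I * ((ε * x ^ 2 / (4 * a) : ℝ) : ℂ)) *
              (Complex.I * ((ε * x / (2 * a) : ℝ) : ℂ))) +
          (((r : ℝ) : ℂ) * ψ s y) *
            ((Complex.exp (Complex.I * ((ε * x ^ 2 / (4 * a) : ℝ) : ℂ)) *
                (Complex.I * ((ε * x / (2 * a) : ℝ) : ℂ))) *
              (Complex.I * ((ε * x / (2 * a) : ℝ) : ℂ)) +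
              Complex.exp (Complex.I * ((ε * x ^ 2 / (4 * a) : ℝ) : ℂ)) *
                (Complex.I * ((ε / (2 * a) : ℝ) : ℂ)))) := by
      rw [Filter.EventuallyEq.deriv_eq hev]
      exact HasDerivAt.deriv ((((hd1.const_mul _).const_mul _).mul (hEx x)).add
        (((hu x hx).const_mul _).mul ((hEx x).mul hw)))
    -- the equation for ψ at (s, y)
    have E0 := heq (s, y) hUm
    dsimp only at E0
    rw [hA.deriv] at E0
    have hyC : ((y : ℝ) : ℂ) = (x : ℂ) / (a : ℂ) := by
      rw [hy_def]; push_cast; ring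
    rw [hyC] at E0
    have hD2eq : deriv (deriv (fun ξ => ψ s ξ)) y
        = -(Complex.I * L (1, 0)) - ((‖ψ s y‖ ^ (4 : ℝ) : ℝ) : ℂ) * ψ s y
          - ((α : ℂ) + Complex.I * (β : ℂ)) / ((x : ℂ) / (a : ℂ)) ^ 2 * ψ s y := by
      linear_combination E0
    have habsP : ‖((r : ℝ) : ℂ) * ψ s y *
        Complex.exp (Complex.I * ((ε * x ^ 2 / (4 * a) : ℝ) : ℂ))‖ ^ (4 : ℝ)
        = (a ^ 2)⁻¹ * ‖ψ s y‖ ^ (4 : ℝ) := by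
      have h1 : ‖((r : ℝ) : ℂ) * ψ s y *
          Complex.exp (Complex.I * ((ε * x ^ 2 / (4 * a) : ℝ) : ℂ))‖
          = r * ‖ψ s y‖ := by
        rw [norm_mul, norm_mul, Complex.norm_of_nonneg hrpos.le, Complex.norm_exp]
        have hre : (Complex.I * ((ε * x ^ 2 / (4 * a) : ℝ) : ℂ)).re = 0 := by
          rw [Complex.mul_re, Complex.I_re, Complex.I_im, Complex.ofReal_re,
            Complex.ofReal_im]
          ring
        rw [hre, Real.exp_zero, mul_one]
      rw [h1, Real.mul_rpow hrpos.le (norm_nonneg _)]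
      have h4 : r ^ (4 : ℝ) = (a ^ 2)⁻¹ := by
        rw [show (4 : ℝ) = ((4 : ℕ) : ℝ) by norm_num, Real.rpow_natCast]
        have h5 : r ^ (4 : ℕ) = (r ^ 2) ^ 2 := by ring
        rw [h5, hr2, inv_pow]
      rw [h4]
    have haC : (a : ℂ) ≠ 0 := Complex.ofReal_ne_zero.mpr hane
    have hxC : (x : ℂ) ≠ 0 := Complex.ofReal_ne_zero.mpr hx
    rw [hT.deriv, hd2x, habsP, hD2eq, hB.deriv]
    clear_value L
    clear hev hd2x hd1 hSpt hu hEx hT hEt hG hη hσ hc hlin hD2 hg' hg hB hA hL hC E0 hD2eq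
      habsP hsm heq hw
    generalize L (1, 0) = A
    generalize L (0, 1) = B
    generalize ψ s y = P
    generalize Complex.exp (Complex.I * ((ε * x ^ 2 / (4 * a) : ℝ) : ℂ)) = e
    clear_value y s r a
    push_cast
    field_simp [haC, hxC]
    ring_nf
end

section
/- (Equivalence of the free-fall potential V = x to the free equation.) Let γ ≠ 0 be a real constant and let ψ be a smooth solution of NLS(γ, V) on ℝ×ℝ, where V(t,x) = x. Then the function φ(t,x) = ψ(t, x + t²) · exp( −i·t·x − (2/3)·i·t³ ) is a smooth solution of NLS(γ, 0) on ℝ×ℝ, i.e. of the free equation i·φ_t + φ_xx + |φ|^γ·φ = 0. -/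
/-- equivalence of the free-fall potential `V = x` to the free equation. -/
theorem stmt_11 (γ : ℝ) (hγ : γ ≠ 0) (ψ : ℝ → ℝ → ℂ)
    (hψ : SolvesNLS γ (fun _ x => (x : ℂ)) ψ Set.univ) :
    SolvesNLS γ (fun _ _ => 0)
      (fun t x => ψ t (x + t ^ 2) *
        Complex.exp (Complex.I * ((-(t * x) - (2 / 3) * t ^ 3 : ℝ) : ℂ))) Set.univ := by
  obtain ⟨hsm, heq⟩ := hψ
  rw [contDiffOn_univ] at hsm
  set F : ℝ × ℝ → ℂ := fun p => ψ p.1 p.2 with hFdef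
  have hFd : Differentiable ℝ F := hsm.differentiable (by simp)
  set G : ℝ × ℝ → ℂ := fun p => fderiv ℝ F p (0, 1) with hGdef
  have hGsm : ContDiff ℝ (⊤ : ℕ∞) G := (hsm.fderiv_right (by simp)).clm_apply contDiff_const
  have hGd : Differentiable ℝ G := hGsm.differentiable (by simp)
  -- abbreviations for partial derivatives
  set a : ℝ × ℝ → ℂ := fun p => fderiv ℝ F p (1, 0) with hadef
  set c : ℝ × ℝ → ℂ := fun p => fderiv ℝ G p (0, 1) with hcdef
  -- key derivative facts
  have keyA : ∀ t x : ℝ, HasDerivAt (fun s => ψ s x) (a (t, x)) t := by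
    intro t x
    have h1 : HasDerivAt (fun s : ℝ => (s, x)) ((1 : ℝ), (0 : ℝ)) t :=
      HasDerivAt.prodMk (hasDerivAt_id t) (hasDerivAt_const t x)
    exact (hFd (t, x)).hasFDerivAt.comp_hasDerivAt t h1
  have keyB : ∀ t x : ℝ, HasDerivAt (fun y => ψ t y) (G (t, x)) x := by
    intro t x
    have h1 : HasDerivAt (fun y : ℝ => (t, y)) ((0 : ℝ), (1 : ℝ)) x :=
      HasDerivAt.prodMk (hasDerivAt_const x t) (hasDerivAt_id x)
    exact (hFd (t, x)).hasFDerivAt.comp_hasDerivAt x h1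
  have keyC : ∀ t x : ℝ, HasDerivAt (deriv (fun y => ψ t y)) (c (t, x)) x := by
    intro t x
    have hfun : deriv (fun y => ψ t y) = fun y => G (t, y) :=
      funext fun y => (keyB t y).deriv
    rw [hfun]
    have h1 : HasDerivAt (fun y : ℝ => (t, y)) ((0 : ℝ), (1 : ℝ)) x :=
      HasDerivAt.prodMk (hasDerivAt_const x t) (hasDerivAt_id x)
    exact (hGd (t, x)).hasFDerivAt.comp_hasDerivAt x h1
  -- hypothesis in fderiv form
  have hyp : ∀ t x : ℝ, Complex.I * a (t, x) + c (t, x)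
      + ((‖ψ t x‖ ^ γ : ℝ) : ℂ) * ψ t x + (x : ℂ) * ψ t x = 0 := by
    intro t x
    have := heq (t, x) trivial
    simpa only [(keyA t x).deriv, (keyC t x).deriv] using this
  -- the phase factor
  set E : ℝ → ℝ → ℂ := fun t x =>
    Complex.exp (Complex.I * ((-(t * x) - (2 / 3) * t ^ 3 : ℝ) : ℂ)) with hEdef
  have hEt : ∀ t x : ℝ, HasDerivAt (fun s => E s x)
      (Complex.I * ((-x - 2 * t ^ 2 : ℝ) : ℂ) * E t x) t := by
    intro t x
    have hθ : HasDerivAt (fun s : ℝ => -(s * x) - (2 / 3) * s ^ 3) (-x - 2 * t ^ 2) t := by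
      have h1 : HasDerivAt (fun s : ℝ => -(s * x) - (2 / 3) * s ^ 3)
          (-(1 * x) - 2 / 3 * (↑3 * t ^ 2)) t :=
        ((hasDerivAt_id t).mul_const x).neg.sub ((hasDerivAt_pow 3 t).const_mul (2 / 3))
      convert h1 using 1
      push_cast; ring
    have h2 := (hθ.ofReal_comp.const_mul Complex.I).cexp
    convert h2 using 1
    ring
  have hEx : ∀ t x : ℝ, HasDerivAt (fun y => E t y)
      (Complex.I * ((-t : ℝ) : ℂ) * E t x) x := by
    intro t x
    have hθ : HasDerivAt (fun y : ℝ => -(t * y) - (2 / 3) * t ^ 3) (-t) x := by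
      have h1 : HasDerivAt (fun y : ℝ => -(t * y) - (2 / 3) * t ^ 3)
          (-(t * 1) - 0) x :=
        ((hasDerivAt_id x).const_mul t).neg.sub (hasDerivAt_const x _)
      convert h1 using 1; ring
    have h2 := (hθ.ofReal_comp.const_mul Complex.I).cexp
    convert h2 using 1
    ring
  -- derivatives of ψ along the shifted curves
  have hCt : ∀ t x : ℝ, HasDerivAt (fun s => ψ s (x + s ^ 2))
      (a (t, x + t ^ 2) + ((2 * t : ℝ) : ℂ) * G (t, x + t ^ 2)) t := by
    intro t x
    have h1 : HasDerivAt (fun s : ℝ => (s, x + s ^ 2)) ((1 : ℝ), (2 * t : ℝ)) t := by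
      refine HasDerivAt.prodMk (hasDerivAt_id t) ?_
      have := (hasDerivAt_const t x).add ((hasDerivAt_pow 2 t))
      simpa using hasDerivAt_pow 2 t
    have h2 := (hFd (t, x + t ^ 2)).hasFDerivAt.comp_hasDerivAt t h1
    have h3 : ((1 : ℝ), (2 * t : ℝ)) = ((1 : ℝ), (0 : ℝ)) + (2 * t : ℝ) • ((0 : ℝ), (1 : ℝ)) := by
      simp [Prod.ext_iff]
    rw [h3, map_add, map_smul, Complex.real_smul] at h2
    exact h2
  have hCx : ∀ t x : ℝ, HasDerivAt (fun y => ψ t (y + t ^ 2)) (G (t, x + t ^ 2)) x := by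
    intro t x
    have h1 : HasDerivAt (fun y : ℝ => (t, y + t ^ 2)) ((0 : ℝ), (1 : ℝ)) x := by
      refine HasDerivAt.prodMk (hasDerivAt_const x t) ?_
      simpa using (hasDerivAt_id x).add_const (t ^ 2)
    exact (hFd (t, x + t ^ 2)).hasFDerivAt.comp_hasDerivAt x h1
  have hGx : ∀ t x : ℝ, HasDerivAt (fun y => G (t, y + t ^ 2)) (c (t, x + t ^ 2)) x := by
    intro t x
    have h1 : HasDerivAt (fun y : ℝ => (t, y + t ^ 2)) ((0 : ℝ), (1 : ℝ)) x := by
      refine HasDerivAt.prodMk (hasDerivAt_const x t) ?_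
      simpa using (hasDerivAt_id x).add_const (t ^ 2)
    exact (hGd (t, x + t ^ 2)).hasFDerivAt.comp_hasDerivAt x h1
  constructor
  · rw [contDiffOn_univ]
    apply ContDiff.mul
    · exact hsm.comp (contDiff_fst.prodMk (contDiff_snd.add (contDiff_fst.pow 2)))
    · exact Complex.contDiff_exp.comp (contDiff_const.mul
        (Complex.ofRealCLM.contDiff.comp
          ((contDiff_fst.mul contDiff_snd).neg.sub (contDiff_const.mul (contDiff_fst.pow 3)))))
  · rintro ⟨t, x⟩ -
    simp only
    -- fold the phase into `E`
    have hg1 : (fun s => ψ s (x + s ^ 2) *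
          Complex.exp (Complex.I * ((-(s * x) - (2 / 3) * s ^ 3 : ℝ) : ℂ)))
        = fun s => ψ s (x + s ^ 2) * E s x := by
      funext s; rw [hEdef]
    have hg2 : (fun y => ψ t (y + t ^ 2) *
          Complex.exp (Complex.I * ((-(t * y) - (2 / 3) * t ^ 3 : ℝ) : ℂ)))
        = fun y => ψ t (y + t ^ 2) * E t y := by
      funext y; rw [hEdef]
    -- time derivative of φ
    have hφt : HasDerivAt (fun s => ψ s (x + s ^ 2) * E s x)
        ((a (t, x + t ^ 2) + ((2 * t : ℝ) : ℂ) * G (t, x + t ^ 2)) * E t x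
          + ψ t (x + t ^ 2) * (Complex.I * ((-x - 2 * t ^ 2 : ℝ) : ℂ) * E t x)) t :=
      (hCt t x).mul (hEt t x)
    -- first space derivative of φ as a function
    have hφx : ∀ y : ℝ, HasDerivAt (fun y' => ψ t (y' + t ^ 2) * E t y')
        (G (t, y + t ^ 2) * E t y
          + ψ t (y + t ^ 2) * (Complex.I * ((-t : ℝ) : ℂ) * E t y)) y :=
      fun y => (hCx t y).mul (hEx t y)
    have hderiv1 : deriv (fun y' => ψ t (y' + t ^ 2) * E t y')
        = fun y => G (t, y + t ^ 2) * E t y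
          + ψ t (y + t ^ 2) * (Complex.I * ((-t : ℝ) : ℂ) * E t y) :=
      funext fun y => (hφx y).deriv
    -- second space derivative
    have hφxx : HasDerivAt (fun y => G (t, y + t ^ 2) * E t y
          + ψ t (y + t ^ 2) * (Complex.I * ((-t : ℝ) : ℂ) * E t y))
        ((c (t, x + t ^ 2) * E t x
            + G (t, x + t ^ 2) * (Complex.I * ((-t : ℝ) : ℂ) * E t x))
          + (G (t, x + t ^ 2) * (Complex.I * ((-t : ℝ) : ℂ) * E t x)
            + ψ t (x + t ^ 2) * (Complex.I * ((-t : ℝ) : ℂ)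
              * (Complex.I * ((-t : ℝ) : ℂ) * E t x)))) x :=
      ((hGx t x).mul (hEx t x)).add
        ((hCx t x).mul (HasDerivAt.const_mul (Complex.I * ((-t : ℝ) : ℂ)) (hEx t x)))
    -- the modulus of the phase is 1
    have habs : ‖ψ t (x + t ^ 2) *
          Complex.exp (Complex.I * ((-(t * x) - (2 / 3) * t ^ 3 : ℝ) : ℂ))‖
        = ‖ψ t (x + t ^ 2)‖ := by
      rw [norm_mul, mul_comm Complex.I, Complex.norm_exp_ofReal_mul_I, mul_one]
    rw [hg1, hφt.deriv, hg2, hderiv1, hφxx.deriv, habs]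
    have h := hyp t (x + t ^ 2)
    simp only [hEdef]
    generalize Complex.exp (Complex.I * ((-(t * x) - (2 / 3) * t ^ 3 : ℝ) : ℂ)) = w
    push_cast at h ⊢
    linear_combination w * h
      - ((x : ℂ) + (t : ℂ) ^ 2) * ψ t (x + t ^ 2) * w * Complex.I_sq
end

section
/- (Equivalence of the repulsive oscillator to the free equation in the critical case γ = 4, via T = tan 2t.) Let ψ be a smooth solution of NLS(4, V) on the domain (−π/4, π/4)×ℝ, where V(t,x) = −x². Then the function φ, defined for all (s,y) ∈ ℝ×ℝ by φ(s,y) = (2·(1+s²))^(−1/4) · ψ( (1/2)·arctan s, y/√(2·(1+s²)) ) · exp( i·s·y²/(4·(1+s²)) ), is a smooth solution of NLS(4, 0) on ℝ×ℝ, i.e. of i·φ_s + φ_yy + |φ|⁴·φ = 0. -/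
set_option maxHeartbeats 1000000 in
/-- equivalence of the repulsive oscillator `V = -x²` to the free
quintic equation via `T = tan 2t`. -/
theorem stmt_13 (ψ : ℝ → ℝ → ℂ)
    (hψ : SolvesNLS 4 (fun _ x => -((x : ℂ)) ^ 2) ψ
      {p : ℝ × ℝ | -(Real.pi / 4) < p.1 ∧ p.1 < Real.pi / 4}) :
    SolvesNLS 4 (fun _ _ => 0)
      (fun s y => (((2 * (1 + s ^ 2)) ^ (-(1 : ℝ) / 4) : ℝ) : ℂ) *
        ψ ((1 / 2) * Real.arctan s) (y / Real.sqrt (2 * (1 + s ^ 2))) *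
        Complex.exp (Complex.I * ((s * y ^ 2 / (4 * (1 + s ^ 2)) : ℝ) : ℂ)))
      Set.univ := by
  obtain ⟨hsm, hpde⟩ := hψ
  have hΩo : IsOpen {p : ℝ × ℝ | -(Real.pi / 4) < p.1 ∧ p.1 < Real.pi / 4} := by
    have : {p : ℝ × ℝ | -(Real.pi / 4) < p.1 ∧ p.1 < Real.pi / 4}
        = Prod.fst ⁻¹' (Set.Ioo (-(Real.pi / 4)) (Real.pi / 4)) := rfl
    rw [this]
    exact isOpen_Ioo.preimage continuous_fst
  constructor
  · -- smoothness
    apply ContDiff.contDiffOn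
    refine contDiff_iff_contDiffAt.mpr fun p => ?_
    have hb : ContDiffAt ℝ (⊤ : ℕ∞) (fun q : ℝ × ℝ => 2 * (1 + q.1 ^ 2)) p := by fun_prop
    have hrpow : ContDiffAt ℝ (⊤ : ℕ∞) (fun q : ℝ × ℝ => (2 * (1 + q.1 ^ 2)) ^ (-(1:ℝ)/4)) p :=
      hb.rpow_const_of_ne (by positivity)
    have h1 : ContDiffAt ℝ (⊤ : ℕ∞) (fun q : ℝ × ℝ => (((2 * (1 + q.1 ^ 2)) ^ (-(1:ℝ)/4) : ℝ) : ℂ)) p :=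
      Complex.ofRealCLM.contDiff.contDiffAt.comp p hrpow
    have hsq : ContDiffAt ℝ (⊤ : ℕ∞) (fun q : ℝ × ℝ => Real.sqrt (2 * (1 + q.1 ^ 2))) p :=
      (Real.contDiffAt_sqrt (by positivity)).comp p hb
    have hq : (1 / 2 * Real.arctan p.1, p.2 / Real.sqrt (2 * (1 + p.1 ^ 2)))
        ∈ {p : ℝ × ℝ | -(Real.pi / 4) < p.1 ∧ p.1 < Real.pi / 4} := by
      constructor
      · have := Real.neg_pi_div_two_lt_arctan p.1; simp only; nlinarith
      · have := Real.arctan_lt_pi_div_two p.1; simp only; nlinarith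
    have hψat : ContDiffAt ℝ (⊤ : ℕ∞) (fun q : ℝ × ℝ => ψ q.1 q.2)
        (1 / 2 * Real.arctan p.1, p.2 / Real.sqrt (2 * (1 + p.1 ^ 2))) :=
      hsm.contDiffAt (hΩo.mem_nhds hq)
    have hinner : ContDiffAt ℝ (⊤ : ℕ∞)
        (fun q : ℝ × ℝ => (1 / 2 * Real.arctan q.1, q.2 / Real.sqrt (2 * (1 + q.1 ^ 2)))) p := by
      refine ContDiffAt.prodMk ?_ ?_
      · exact contDiffAt_const.mul ((Real.contDiff_arctan.contDiffAt).comp p contDiffAt_fst)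
      · exact contDiffAt_snd.div hsq (by positivity)
    have h2 : ContDiffAt ℝ (⊤ : ℕ∞)
        (fun q : ℝ × ℝ => ψ (1 / 2 * Real.arctan q.1) (q.2 / Real.sqrt (2 * (1 + q.1 ^ 2)))) p :=
      ContDiffAt.comp (g := fun q : ℝ × ℝ => ψ q.1 q.2) p hψat hinner
    have hexpinner : ContDiffAt ℝ (⊤ : ℕ∞) (fun q : ℝ × ℝ => q.1 * q.2 ^ 2 / (4 * (1 + q.1 ^ 2))) p := by
      exact ContDiffAt.div (by fun_prop) (by fun_prop) (by positivity)
    have h3 : ContDiffAt ℝ (⊤ : ℕ∞)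
        (fun q : ℝ × ℝ => Complex.exp (Complex.I * ((q.1 * q.2 ^ 2 / (4 * (1 + q.1 ^ 2)) : ℝ) : ℂ))) p := by
      refine (Complex.contDiff_exp (𝕜 := ℝ)).contDiffAt.comp p ?_
      exact contDiffAt_const.mul (Complex.ofRealCLM.contDiff.contDiffAt.comp p hexpinner)
    exact (h1.mul h2).mul h3
  · rintro ⟨s, y⟩ -
    simp only
    have hc2 : (0:ℝ) < 2 * (1 + s ^ 2) := by positivity
    have hs2 : (0:ℝ) < 1 + s ^ 2 := by positivity
    set r : ℝ := Real.sqrt (2 * (1 + s ^ 2)) with hrdef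
    set a : ℝ := (2 * (1 + s ^ 2)) ^ (-(1:ℝ)/4) with hadef
    set τ : ℝ := 1 / 2 * Real.arctan s with hτdef
    have hr : (0:ℝ) < r := Real.sqrt_pos.mpr hc2
    have hr2 : r ^ 2 = 2 * (1 + s ^ 2) := Real.sq_sqrt hc2.le
    have ha : (0:ℝ) < a := Real.rpow_pos_of_pos hc2 _
    have hq : (τ, y / r) ∈ {p : ℝ × ℝ | -(Real.pi / 4) < p.1 ∧ p.1 < Real.pi / 4} := by
      constructor
      · have := Real.neg_pi_div_two_lt_arctan s; simp only [hτdef]; nlinarith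
      · have := Real.arctan_lt_pi_div_two s; simp only [hτdef]; nlinarith
    have hpq := hpde (τ, y / r) hq
    simp only at hpq
    -- slice smoothness in x
    have hg : ContDiff ℝ ((⊤:ℕ∞) : WithTop ℕ∞) (fun x => ψ τ x) := by
      refine contDiff_iff_contDiffAt.mpr fun x => ?_
      have hmem : (τ, x) ∈ {p : ℝ × ℝ | -(Real.pi / 4) < p.1 ∧ p.1 < Real.pi / 4} := by
        constructor
        · have := Real.neg_pi_div_two_lt_arctan s; simp only [hτdef]; nlinarith
        · have := Real.arctan_lt_pi_div_two s; simp only [hτdef]; nlinarith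
      have h1 : ContDiffAt ℝ (⊤ : ℕ∞) (fun p : ℝ × ℝ => ψ p.1 p.2) (τ, x) :=
        hsm.contDiffAt (hΩo.mem_nhds hmem)
      exact (h1.of_le (by simp)).comp x (contDiffAt_const.prodMk contDiffAt_id)
    have hgd : Differentiable ℝ (fun x => ψ τ x) := (contDiff_infty_iff_deriv.mp hg).1
    set g1 : ℝ → ℂ := deriv (fun x => ψ τ x) with hg1def
    have hg1 : ContDiff ℝ ((⊤:ℕ∞) : WithTop ℕ∞) g1 := (contDiff_infty_iff_deriv.mp hg).2
    have hg1d : Differentiable ℝ g1 := (contDiff_infty_iff_deriv.mp hg1).1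
    -- full fderiv at the point
    have hFq : ContDiffAt ℝ (⊤ : ℕ∞) (fun p : ℝ × ℝ => ψ p.1 p.2) (τ, y / r) :=
      hsm.contDiffAt (hΩo.mem_nhds hq)
    set L : ℝ × ℝ →L[ℝ] ℂ := fderiv ℝ (fun p : ℝ × ℝ => ψ p.1 p.2) (τ, y / r) with hLdef
    have hL : HasFDerivAt (fun p : ℝ × ℝ => ψ p.1 p.2) L (τ, y / r) :=
      (hFq.differentiableAt (by simp)).hasFDerivAt
    have hPt : HasDerivAt (fun t => ψ t (y / r)) (L (1, 0)) τ := by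
      have h := hL.comp_hasDerivAt τ ((hasDerivAt_id τ).prodMk (hasDerivAt_const τ (y / r)))
      exact h
    have hPx : HasDerivAt (fun x => ψ τ x) (L (0, 1)) (y / r) := by
      have h := hL.comp_hasDerivAt (y / r)
        ((hasDerivAt_const (y / r) τ).prodMk (hasDerivAt_id (y / r)))
      exact h
    have hg1val : g1 (y / r) = L (0, 1) := hPx.deriv
    rw [hPt.deriv] at hpq
    -- derivative in s of the transformed function
    have hbase : HasDerivAt (fun t : ℝ => 2 * (1 + t ^ 2)) (4 * s) s := by
      have := ((hasDerivAt_pow 2 s).const_add 1).const_mul (2:ℝ)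
      refine this.congr_deriv ?_
      norm_num; ring
    have hA : HasDerivAt (fun t : ℝ => (2 * (1 + t ^ 2)) ^ (-(1:ℝ)/4)) (-s / (2 * (1 + s ^ 2)) * a) s := by
      have h := (Real.hasDerivAt_rpow_const (x := 2 * (1 + s ^ 2)) (p := -(1:ℝ)/4)
        (Or.inl hc2.ne')).comp s hbase
      refine h.congr_deriv ?_
      rw [show (-(1:ℝ)/4 - 1) = -(1:ℝ)/4 + (-1) by ring, Real.rpow_add hc2, Real.rpow_neg_one]
      rw [hadef]; field_simp
    have hτd : HasDerivAt (fun t : ℝ => 1 / 2 * Real.arctan t) (1 / (2 * (1 + s ^ 2))) s := by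
      have := (Real.hasDerivAt_arctan s).const_mul (1/2 : ℝ)
      refine this.congr_deriv ?_
      field_simp
    have hsqrt : HasDerivAt (fun t : ℝ => Real.sqrt (2 * (1 + t ^ 2)))
        (1 / (2 * r) * (4 * s)) s := by
      exact (Real.hasDerivAt_sqrt hc2.ne').comp s hbase
    have hX : HasDerivAt (fun t : ℝ => y / Real.sqrt (2 * (1 + t ^ 2)))
        (-(s * y) / ((1 + s ^ 2) * r)) s := by
      have h := (hasDerivAt_const s y).div hsqrt hr.ne'
      refine h.congr_deriv ?_
      rw [← hrdef, hr2]
      field_simp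
      ring
    have hcomp : HasDerivAt (fun t => ψ (1 / 2 * Real.arctan t) (y / Real.sqrt (2 * (1 + t ^ 2))))
        (L (1 / (2 * (1 + s ^ 2)), -(s * y) / ((1 + s ^ 2) * r))) s := by
      exact hL.comp_hasDerivAt s (hτd.prodMk hX)
    have hsplit : L (1 / (2 * (1 + s ^ 2)), -(s * y) / ((1 + s ^ 2) * r))
        = (1 / (2 * (1 + s ^ 2)) : ℝ) • L (1, 0) + (-(s * y) / ((1 + s ^ 2) * r) : ℝ) • L (0, 1) := by
      rw [← map_smul, ← map_smul, ← map_add]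
      congr 1
      simp [Prod.ext_iff]
    have hcph : HasDerivAt (fun t : ℝ => t * y ^ 2 / (4 * (1 + t ^ 2)))
        ((1 - s ^ 2) * y ^ 2 / (4 * (1 + s ^ 2) ^ 2)) s := by
      have h := ((hasDerivAt_id s).mul_const (y ^ 2)).div
        (((hasDerivAt_pow 2 s).const_add 1).const_mul (4:ℝ)) (by positivity)
      refine h.congr_deriv ?_
      field_simp
      simp only [id]; ring
    have hE : HasDerivAt
        (fun t : ℝ => Complex.exp (Complex.I * ((t * y ^ 2 / (4 * (1 + t ^ 2)) : ℝ) : ℂ)))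
        (Complex.exp (Complex.I * ((s * y ^ 2 / (4 * (1 + s ^ 2)) : ℝ) : ℂ))
          * (Complex.I * (((1 - s ^ 2) * y ^ 2 / (4 * (1 + s ^ 2) ^ 2) : ℝ) : ℂ))) s := by
      exact (hcph.ofReal_comp.const_mul Complex.I).cexp
    have hSfull : HasDerivAt (fun t : ℝ => (((2 * (1 + t ^ 2)) ^ (-(1:ℝ)/4) : ℝ) : ℂ) *
        ψ (1 / 2 * Real.arctan t) (y / Real.sqrt (2 * (1 + t ^ 2))) *
        Complex.exp (Complex.I * ((t * y ^ 2 / (4 * (1 + t ^ 2)) : ℝ) : ℂ))) _ s :=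
      ((hA.ofReal_comp.mul hcomp).mul hE)
    simp only [Pi.mul_apply] at hSfull
    rw [hSfull.deriv]
    -- y derivatives
    have hEx : ∀ x : ℝ, HasDerivAt
        (fun x : ℝ => Complex.exp (Complex.I * ((s * x ^ 2 / (4 * (1 + s ^ 2)) : ℝ) : ℂ)))
        (Complex.exp (Complex.I * ((s * x ^ 2 / (4 * (1 + s ^ 2)) : ℝ) : ℂ))
          * (Complex.I * ((s * x / (2 * (1 + s ^ 2)) : ℝ) : ℂ))) x := by
      intro x
      have hin : HasDerivAt (fun x : ℝ => s * x ^ 2 / (4 * (1 + s ^ 2)))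
          (s * x / (2 * (1 + s ^ 2))) x := by
        have h := ((hasDerivAt_pow 2 x).const_mul s).div_const (4 * (1 + s ^ 2))
        refine h.congr_deriv ?_
        field_simp
        ring
      exact (hin.ofReal_comp.const_mul Complex.I).cexp
    have hgx : ∀ x : ℝ, HasDerivAt (fun x : ℝ => ψ τ (x / r)) (g1 (x / r) * (1 / (r : ℂ))) x := by
      intro x
      have h := HasDerivAt.scomp x (hgd (x / r)).hasDerivAt ((hasDerivAt_id x).div_const r)
      rw [← hg1def] at h
      have e : ((1:ℝ)/r) • g1 (x/r) = g1 (x/r) * (1/(r:ℂ)) := by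
        rw [Complex.real_smul]; push_cast; ring
      rw [e] at h; exact h
    have hD1 : ∀ x : ℝ, HasDerivAt
        (fun x : ℝ => ((a:ℝ) : ℂ) * ψ τ (x / r)
          * Complex.exp (Complex.I * ((s * x ^ 2 / (4 * (1 + s ^ 2)) : ℝ) : ℂ)))
        (((a:ℝ) : ℂ) * (g1 (x / r) * (1 / (r : ℂ)))
            * Complex.exp (Complex.I * ((s * x ^ 2 / (4 * (1 + s ^ 2)) : ℝ) : ℂ))
          + ((a:ℝ) : ℂ) * ψ τ (x / r)
            * (Complex.exp (Complex.I * ((s * x ^ 2 / (4 * (1 + s ^ 2)) : ℝ) : ℂ))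
              * (Complex.I * ((s * x / (2 * (1 + s ^ 2)) : ℝ) : ℂ)))) x := by
      intro x
      exact (((hgx x).const_mul ((a:ℝ) : ℂ)).mul (hEx x))
    have hDeq : (deriv fun x : ℝ => ((a:ℝ) : ℂ) * ψ τ (x / r)
          * Complex.exp (Complex.I * ((s * x ^ 2 / (4 * (1 + s ^ 2)) : ℝ) : ℂ)))
        = fun x : ℝ => (((a:ℝ) : ℂ) * (g1 (x / r) * (1 / (r : ℂ)))
            * Complex.exp (Complex.I * ((s * x ^ 2 / (4 * (1 + s ^ 2)) : ℝ) : ℂ))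
          + ((a:ℝ) : ℂ) * ψ τ (x / r)
            * (Complex.exp (Complex.I * ((s * x ^ 2 / (4 * (1 + s ^ 2)) : ℝ) : ℂ))
              * (Complex.I * ((s * x / (2 * (1 + s ^ 2)) : ℝ) : ℂ)))) :=
      funext fun x => (hD1 x).deriv
    rw [hDeq]
    have hg1x : HasDerivAt (fun x : ℝ => g1 (x / r)) (deriv g1 (y / r) * (1 / (r : ℂ))) y := by
      have h := HasDerivAt.scomp y (hg1d (y / r)).hasDerivAt ((hasDerivAt_id y).div_const r)
      have e : ((1:ℝ)/r) • deriv g1 (y/r) = deriv g1 (y/r) * (1/(r:ℂ)) := by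
        rw [Complex.real_smul]; push_cast; ring
      rw [e] at h; exact h
    have hk : HasDerivAt (fun x : ℝ => Complex.I * ((s * x / (2 * (1 + s ^ 2)) : ℝ) : ℂ))
        (Complex.I * ((s / (2 * (1 + s ^ 2)) : ℝ) : ℂ)) y := by
      have hin : HasDerivAt (fun x : ℝ => s * x / (2 * (1 + s ^ 2))) (s / (2 * (1 + s ^ 2))) y := by
        have h := ((hasDerivAt_id y).const_mul s).div_const (2 * (1 + s ^ 2))
        refine h.congr_deriv ?_
        field_simp
      exact hin.ofReal_comp.const_mul Complex.I
    have hT : HasDerivAt (fun x : ℝ => (((a:ℝ) : ℂ) * (g1 (x / r) * (1 / (r : ℂ)))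
            * Complex.exp (Complex.I * ((s * x ^ 2 / (4 * (1 + s ^ 2)) : ℝ) : ℂ))
          + ((a:ℝ) : ℂ) * ψ τ (x / r)
            * (Complex.exp (Complex.I * ((s * x ^ 2 / (4 * (1 + s ^ 2)) : ℝ) : ℂ))
              * (Complex.I * ((s * x / (2 * (1 + s ^ 2)) : ℝ) : ℂ))))) _ y := ((((hg1x.mul_const (1 / (r:ℂ))).const_mul ((a:ℝ):ℂ)).mul (hEx y)).add
        ((((hgx y).const_mul ((a:ℝ):ℂ)).mul ((hEx y).mul hk))))
    rw [hT.deriv]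
    -- modulus computation
    have habs : ‖(((a:ℝ):ℂ) * ψ τ (y / r)
        * Complex.exp (Complex.I * ((s * y ^ 2 / (4 * (1 + s ^ 2)) : ℝ) : ℂ)))‖
        = a * ‖ψ τ (y / r)‖ := by
      rw [norm_mul, norm_mul, Complex.norm_of_nonneg ha.le,
        show Complex.I * ((s * y ^ 2 / (4 * (1 + s ^ 2)) : ℝ) : ℂ)
          = ((s * y ^ 2 / (4 * (1 + s ^ 2)) : ℝ) : ℂ) * Complex.I from mul_comm _ _,
        Complex.norm_exp_ofReal_mul_I, mul_one]
    rw [habs]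
    have hpow : (a * ‖ψ τ (y / r)‖) ^ (4:ℝ)
        = (2 * (1 + s ^ 2))⁻¹ * ‖ψ τ (y / r)‖ ^ (4:ℝ) := by
      rw [Real.mul_rpow ha.le (norm_nonneg _)]
      congr 1
      rw [hadef, ← Real.rpow_mul hc2.le, show (-(1:ℝ)/4*4 : ℝ) = -1 by norm_num,
        Real.rpow_neg_one]
    rw [hpow]
    rw [hsplit]
    set M : ℝ := ‖ψ τ (y / r)‖ ^ (4:ℝ) with hMdef
    set Z : ℂ := ψ τ (y / r) with hZdef
    set Pt : ℂ := L (1, 0) with hPtdef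
    set Px : ℂ := L (0, 1) with hPxdef
    set Pxx : ℂ := deriv g1 (y / r) with hPxxdef
    have hr2C : ((r:ℝ):ℂ) ^ 2 = 2 * (1 + ((s:ℝ):ℂ) ^ 2) := by exact_mod_cast hr2
    have hrne : ((r:ℝ):ℂ) ≠ 0 := by exact_mod_cast hr.ne'
    have hsne : (1:ℂ) + ((s:ℝ):ℂ) ^ 2 ≠ 0 := by
      intro hcon
      have : ((1 + s^2 : ℝ):ℂ) = 0 := by push_cast; linear_combination hcon
      exact hs2.ne' (by exact_mod_cast this)
    push_cast at hpq ⊢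
    simp only [Complex.real_smul]
    push_cast
    rw [show (((2 * (1 + s ^ 2) : ℝ) ^ (-(1:ℝ)/4) : ℝ) : ℂ) = ((a:ℝ):ℂ) from rfl]
    rw [hg1val]
    field_simp [hrne] at hpq
    have hI2 : Complex.I ^ 2 = -1 := Complex.I_sq
    have hrW : (r:ℂ) * ((r:ℂ))⁻¹ = 1 := mul_inv_cancel₀ hrne
    have hsV : ((1:ℂ) + (s:ℂ)^2) * ((1:ℂ) + (s:ℂ)^2)⁻¹ = 1 := mul_inv_cancel₀ hsne
    have hPxx2 : Pxx = (y:ℂ)^2 * Z * ((r:ℂ)⁻¹)^2 - Complex.I * Pt - (M:ℂ) * Z := by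
      linear_combination ((r:ℂ)⁻¹)^2 * hpq
        - (Complex.I*Pt + Pxx + (M:ℂ)*Z) * ((r:ℂ)*(r:ℂ)⁻¹ + 1) * hrW
    rw [hPxx2]
    have hA1 : (2*(1+(s:ℂ)^2)) * (2*(1+(s:ℂ)^2))⁻¹ = 1 :=
      mul_inv_cancel₀ (mul_ne_zero two_ne_zero hsne)
    have hA2 : (4*(1+(s:ℂ)^2)^2) * (4*(1+(s:ℂ)^2)^2)⁻¹ = 1 :=
      mul_inv_cancel₀ (mul_ne_zero (by norm_num) (pow_ne_zero 2 hsne))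
    have hA3 : ((1+(s:ℂ)^2)*(r:ℂ)) * ((1+(s:ℂ)^2)*(r:ℂ))⁻¹ = 1 :=
      mul_inv_cancel₀ (mul_ne_zero hsne hrne)
    linear_combination ((Complex.exp (Complex.I * ((s:ℂ) * (y:ℂ)^2 / (4 * (1 + (s:ℂ)^2)))))*(a:ℂ)*(r:ℂ)⁻¹^2*(2*(1+(s:ℂ)^2))⁻¹*(M:ℂ)*Z + (-1:ℂ)*(Complex.exp (Complex.I * ((s:ℂ) * (y:ℂ)^2 / (4 * (1 + (s:ℂ)^2)))))*(a:ℂ)*(r:ℂ)⁻¹^2*(2*(1+(s:ℂ)^2))⁻¹^2*(y:ℂ)^2*Z + (-1:ℂ)*(Complex.exp (Complex.I * ((s:ℂ) * (y:ℂ)^2 / (4 * (1 + (s:ℂ)^2)))))*(a:ℂ)*(r:ℂ)⁻¹^4*(2*(1+(s:ℂ)^2))⁻¹*(y:ℂ)^2*Z + Complex.I*(Complex.exp (Complex.I * ((s:ℂ) * (y:ℂ)^2 / (4 * (1 + (s:ℂ)^2)))))*(a:ℂ)*(r:ℂ)⁻¹^2*(2*(1+(s:ℂ)^2))⁻¹*Pt)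 * hr2C + ((-1:ℂ)*(Complex.exp (Complex.I * ((s:ℂ) * (y:ℂ)^2 / (4 * (1 + (s:ℂ)^2)))))*(a:ℂ)*(2*(1+(s:ℂ)^2))⁻¹*(M:ℂ)*Z + (Complex.exp (Complex.I * ((s:ℂ) * (y:ℂ)^2 / (4 * (1 + (s:ℂ)^2)))))*(a:ℂ)*(2*(1+(s:ℂ)^2))⁻¹^2*(y:ℂ)^2*Z + (Complex.exp (Complex.I * ((s:ℂ) * (y:ℂ)^2 / (4 * (1 + (s:ℂ)^2)))))*(a:ℂ)*(r:ℂ)⁻¹^2*(2*(1+(s:ℂ)^2))⁻¹*(y:ℂ)^2*Z + (-1:ℂ)*(Complex.exp (Complex.I * ((s:ℂ) * (y:ℂ)^2 / (4 * (1 + (s:ℂ)^2)))))*(a:ℂ)*(r:ℂ)*(r:ℂ)⁻¹*(2*(1+(s:ℂ)^2))⁻¹*(M:ℂ)*Z + (Complex.exp (Complex.I * ((s:ℂ) * (y:ℂ)^2 / (4 * (1 + (s:ℂ)^2)))))*(a:ℂ)*(r:ℂ)*(r:ℂ)⁻¹*(2*(1+(s:ℂ)^2))⁻¹^2*(y:ℂ)^2*Z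 + (Complex.exp (Complex.I * ((s:ℂ) * (y:ℂ)^2 / (4 * (1 + (s:ℂ)^2)))))*(a:ℂ)*(r:ℂ)*(r:ℂ)⁻¹^3*(2*(1+(s:ℂ)^2))⁻¹*(y:ℂ)^2*Z + (-1:ℂ)*Complex.I*(Complex.exp (Complex.I * ((s:ℂ) * (y:ℂ)^2 / (4 * (1 + (s:ℂ)^2)))))*(a:ℂ)*(2*(1+(s:ℂ)^2))⁻¹*Pt + (2:ℂ)*Complex.I*(Complex.exp (Complex.I * ((s:ℂ) * (y:ℂ)^2 / (4 * (1 + (s:ℂ)^2)))))*(a:ℂ)*(s:ℂ)*(2*(1+(s:ℂ)^2))⁻¹*((1+(s:ℂ)^2)*(r:ℂ))⁻¹*(y:ℂ)*Px + (2:ℂ)*Complex.I*(Complex.exp (Complex.I * ((s:ℂ) * (y:ℂ)^2 / (4 * (1 + (s:ℂ)^2)))))*(a:ℂ)*(s:ℂ)^3*(2*(1+(s:ℂ)^2))⁻¹*((1+(s:ℂ)^2)*(r:ℂ))⁻¹*(y:ℂ)*Px + (-1:ℂ)*Complex.I*(Complex.exp (Complex.I * ((s:ℂ) * (y:ℂ)^2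 / (4 * (1 + (s:ℂ)^2)))))*(a:ℂ)*(r:ℂ)*(r:ℂ)⁻¹*(2*(1+(s:ℂ)^2))⁻¹*Pt) * hrW + ((Complex.exp (Complex.I * ((s:ℂ) * (y:ℂ)^2 / (4 * (1 + (s:ℂ)^2)))))*(a:ℂ)*(4*(1+(s:ℂ)^2)^2)⁻¹*(y:ℂ)^2*Z + (-1:ℂ)*(Complex.exp (Complex.I * ((s:ℂ) * (y:ℂ)^2 / (4 * (1 + (s:ℂ)^2)))))*(a:ℂ)*(s:ℂ)^2*(4*(1+(s:ℂ)^2)^2)⁻¹*(y:ℂ)^2*Z + (Complex.exp (Complex.I * ((s:ℂ) * (y:ℂ)^2 / (4 * (1 + (s:ℂ)^2)))))*(a:ℂ)*(s:ℂ)^2*(2*(1+(s:ℂ)^2))⁻¹^2*(y:ℂ)^2*Z) * hI2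
      + ((Complex.exp (Complex.I * ((s:ℂ) * (y:ℂ)^2 / (4 * (1 + (s:ℂ)^2)))))*(a:ℂ)*(4*(1+(s:ℂ)^2)^2)⁻¹*(y:ℂ)^2*Z + (2:ℂ)*(Complex.exp (Complex.I * ((s:ℂ) * (y:ℂ)^2 / (4 * (1 + (s:ℂ)^2)))))*(a:ℂ)*(2*(1+(s:ℂ)^2))⁻¹*(4*(1+(s:ℂ)^2)^2)⁻¹*(y:ℂ)^2*Z + (-1:ℂ)*(Complex.exp (Complex.I * ((s:ℂ) * (y:ℂ)^2 / (4 * (1 + (s:ℂ)^2)))))*(a:ℂ)*(s:ℂ)^2*(4*(1+(s:ℂ)^2)^2)⁻¹*(y:ℂ)^2*Z + (-2:ℂ)*(Complex.exp (Complex.I * ((s:ℂ) * (y:ℂ)^2 / (4 * (1 + (s:ℂ)^2)))))*(a:ℂ)*(s:ℂ)^4*(2*(1+(s:ℂ)^2))⁻¹*(4*(1+(s:ℂ)^2)^2)⁻¹*(y:ℂ)^2*Z + (Complex.exp (Complex.I * ((s:ℂ) * (y:ℂ)^2 / (4 * (1 + (s:ℂ)^2)))))*(a:ℂ)*(r:ℂ)⁻¹^2*(M:ℂ)*Z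 + (-1:ℂ)*(Complex.exp (Complex.I * ((s:ℂ) * (y:ℂ)^2 / (4 * (1 + (s:ℂ)^2)))))*(a:ℂ)*(r:ℂ)⁻¹^2*(2*(1+(s:ℂ)^2))⁻¹*(y:ℂ)^2*Z + (-1:ℂ)*(Complex.exp (Complex.I * ((s:ℂ) * (y:ℂ)^2 / (4 * (1 + (s:ℂ)^2)))))*(a:ℂ)*(r:ℂ)⁻¹^4*(y:ℂ)^2*Z + Complex.I*(Complex.exp (Complex.I * ((s:ℂ) * (y:ℂ)^2 / (4 * (1 + (s:ℂ)^2)))))*(a:ℂ)*(s:ℂ)*((1+(s:ℂ)^2)*(r:ℂ))⁻¹*(y:ℂ)*Px + Complex.I*(Complex.exp (Complex.I * ((s:ℂ) * (y:ℂ)^2 / (4 * (1 + (s:ℂ)^2)))))*(a:ℂ)*(r:ℂ)⁻¹^2*Pt) * hA1 + ((-1:ℂ)*(Complex.exp (Complex.I * ((s:ℂ) * (y:ℂ)^2 / (4 * (1 + (s:ℂ)^2)))))*(a:ℂ)*(2*(1+(s:ℂ)^2))⁻¹^2*(y:ℂ)^2*Z + (Complex.exp (Complex.I * ((s:ℂ)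 * (y:ℂ)^2 / (4 * (1 + (s:ℂ)^2)))))*(a:ℂ)*(s:ℂ)^2*(2*(1+(s:ℂ)^2))⁻¹^2*(y:ℂ)^2*Z) * hA2 + ((-2:ℂ)*Complex.I*(Complex.exp (Complex.I * ((s:ℂ) * (y:ℂ)^2 / (4 * (1 + (s:ℂ)^2)))))*(a:ℂ)*(r:ℂ)⁻¹*(s:ℂ)*(2*(1+(s:ℂ)^2))⁻¹*(y:ℂ)*Px) * hA3
end

section
/- (Commutation relation [D(ξ¹), D(ξ²)] = D(ξ¹·ξ²′ − ξ²·ξ¹′).) Let γ ≠ 0 be a real constant and let ξ¹, ξ² : ℝ → ℝ be smooth. Then the Lie bracket of the vector fields D(ξ¹) and D(ξ²) on ℝ×ℝ×ℂ equals the vector field D(ξ), where ξ(t) = ξ¹(t)·(ξ²)′(t) − ξ²(t)·(ξ¹)′(t); that is, at every point p ∈ ℝ×ℝ×ℂ: [D(ξ¹), D(ξ²)](p) = D(ξ¹·(ξ²)′ − ξ²·(ξ¹)′)(p). -/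
set_option maxHeartbeats 1000000


/-- The vector field `D(ξ)` on `ℝ × ℝ × ℂ`. -/
noncomputable def Dfield (γ : ℝ) (ξ : ℝ → ℝ) (p : ℝ × ℝ × ℂ) : ℝ × ℝ × ℂ :=
  (ξ p.1, deriv ξ p.1 * p.2.1 / 2,
    (Complex.I * ((deriv (deriv ξ) p.1 : ℝ) : ℂ) * ((p.2.1 : ℝ) : ℂ) ^ 2 / 8
      - ((deriv ξ p.1 : ℝ) : ℂ) / (γ : ℂ)) * p.2.2)

/-- The vector field `G(χ)` on `ℝ × ℝ × ℂ`. -/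
noncomputable def Gfield (χ : ℝ → ℝ) (p : ℝ × ℝ × ℂ) : ℝ × ℝ × ℂ :=
  (0, χ p.1, Complex.I / 2 * ((deriv χ p.1 : ℝ) : ℂ) * ((p.2.1 : ℝ) : ℂ) * p.2.2)

/-- The vector field `λ M` on `ℝ × ℝ × ℂ`. -/
noncomputable def Mfield (lam : ℝ → ℝ) (p : ℝ × ℝ × ℂ) : ℝ × ℝ × ℂ :=
  (0, 0, Complex.I * ((lam p.1 : ℝ) : ℂ) * p.2.2)

/-- Lie bracket of vector fields: `[v,w](p) = Dw(p)[v(p)] - Dv(p)[w(p)]`. -/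
noncomputable def lieBr (v w : ℝ × ℝ × ℂ → ℝ × ℝ × ℂ) (p : ℝ × ℝ × ℂ) : ℝ × ℝ × ℂ :=
  fderiv ℝ w p (v p) - fderiv ℝ v p (w p)

lemma hasFDerivAt_sq {E : Type*} [NormedAddCommGroup E] [NormedSpace ℝ E]
    {f : E → ℂ} {f' : E →L[ℝ] ℂ} {x : E} (hf : HasFDerivAt f f' x) :
    HasFDerivAt (fun y => f y ^ 2) (f x • f' + f x • f') x := by
  simpa [pow_two] using hf.fun_mul hf

lemma fderivD (γ : ℝ) (ξ : ℝ → ℝ) (h : ContDiff ℝ (⊤ : ℕ∞) ξ) (p v : ℝ × ℝ × ℂ) :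
    fderiv ℝ (Dfield γ ξ) p v =
      (deriv ξ p.1 * v.1,
       (deriv (deriv ξ) p.1 * v.1 * p.2.1 + deriv ξ p.1 * v.2.1) / 2,
       ((Complex.I * ((deriv (deriv (deriv ξ)) p.1 : ℝ) : ℂ) * ((p.2.1:ℝ):ℂ)^2 * v.1
          + Complex.I * ((deriv (deriv ξ) p.1 : ℝ):ℂ) * (2 * ((p.2.1:ℝ):ℂ) * v.2.1)) / 8
         - ((deriv (deriv ξ) p.1 : ℝ):ℂ) * v.1 / (γ:ℂ)) * p.2.2
       + (Complex.I * ((deriv (deriv ξ) p.1 : ℝ):ℂ) * ((p.2.1:ℝ):ℂ)^2 / 8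
          - ((deriv ξ p.1:ℝ):ℂ) / (γ:ℂ)) * v.2.2) := by
  have hi : ContDiff ℝ (⊤ : ℕ∞) ξ := h.of_le (by simp)
  obtain ⟨hd0, h'⟩ := contDiff_infty_iff_deriv.1 hi
  obtain ⟨hd1, h''⟩ := contDiff_infty_iff_deriv.1 h'
  obtain ⟨hd2, h'''⟩ := contDiff_infty_iff_deriv.1 h''
  have D0 : HasDerivAt ξ (deriv ξ p.1) p.1 := (hd0 p.1).hasDerivAt
  have D1 : HasDerivAt (deriv ξ) (deriv (deriv ξ) p.1) p.1 := (hd1 p.1).hasDerivAt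
  have D2 : HasDerivAt (deriv (deriv ξ)) (deriv (deriv (deriv ξ)) p.1) p.1 := (hd2 p.1).hasDerivAt
  have ht : HasFDerivAt (fun q : ℝ × ℝ × ℂ => q.1)
      (ContinuousLinearMap.fst ℝ ℝ (ℝ × ℂ)) p := hasFDerivAt_fst
  have hx : HasFDerivAt (fun q : ℝ × ℝ × ℂ => q.2.1)
      ((ContinuousLinearMap.fst ℝ ℝ ℂ).comp (ContinuousLinearMap.snd ℝ ℝ (ℝ × ℂ))) p :=
    hasFDerivAt_fst.comp p hasFDerivAt_snd
  have hz : HasFDerivAt (fun q : ℝ × ℝ × ℂ => q.2.2)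
      ((ContinuousLinearMap.snd ℝ ℝ ℂ).comp (ContinuousLinearMap.snd ℝ ℝ (ℝ × ℂ))) p :=
    hasFDerivAt_snd.comp p hasFDerivAt_snd
  have c1 := D0.comp_hasFDerivAt p ht
  have c2 := ((D1.comp_hasFDerivAt p ht).mul hx).mul_const (2:ℝ)⁻¹
  have hA := Complex.ofRealCLM.hasFDerivAt.comp p (D2.comp_hasFDerivAt p ht)
  have hX := Complex.ofRealCLM.hasFDerivAt.comp p hx
  have hX2 := hasFDerivAt_sq hX
  have hB := ((hA.const_mul Complex.I).mul hX2).mul_const (8:ℂ)⁻¹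
  have hC := (Complex.ofRealCLM.hasFDerivAt.comp p (D1.comp_hasFDerivAt p ht)).mul_const ((γ:ℂ))⁻¹
  have c3 := (hB.sub hC).mul hz
  have H := HasFDerivAt.prodMk c1 (HasFDerivAt.prodMk c2 c3)
  have H' : HasFDerivAt (Dfield γ ξ)
      ((deriv ξ p.1 • ContinuousLinearMap.fst ℝ ℝ (ℝ × ℂ)).prod
      (((2:ℝ)⁻¹ •
            ((deriv ξ ∘ Prod.fst) p • (ContinuousLinearMap.fst ℝ ℝ ℂ).comp (ContinuousLinearMap.snd ℝ ℝ (ℝ × ℂ)) +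
              p.2.1 • deriv (deriv ξ) p.1 • ContinuousLinearMap.fst ℝ ℝ (ℝ × ℂ))).prod
        ((Complex.I * (⇑Complex.ofRealCLM ∘ deriv (deriv ξ) ∘ Prod.fst) p *
                  (⇑Complex.ofRealCLM ∘ fun q => q.2.1) p ^ 2 *
                (8:ℂ)⁻¹ -
              (⇑Complex.ofRealCLM ∘ deriv ξ ∘ Prod.fst) p * (↑γ)⁻¹) •
            (ContinuousLinearMap.snd ℝ ℝ ℂ).comp (ContinuousLinearMap.snd ℝ ℝ (ℝ × ℂ)) +
          p.2.2 •
            ((8:ℂ)⁻¹ •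
                ((Complex.I * (⇑Complex.ofRealCLM ∘ deriv (deriv ξ) ∘ Prod.fst) p) •
                    ((⇑Complex.ofRealCLM ∘ fun q => q.2.1) p •
                        Complex.ofRealCLM.comp
                          ((ContinuousLinearMap.fst ℝ ℝ ℂ).comp (ContinuousLinearMap.snd ℝ ℝ (ℝ × ℂ))) +
                      (⇑Complex.ofRealCLM ∘ fun q => q.2.1) p •
                        Complex.ofRealCLM.comp
                          ((ContinuousLinearMap.fst ℝ ℝ ℂ).comp (ContinuousLinearMap.snd ℝ ℝ (ℝ × ℂ)))) +
                  (⇑Complex.ofRealCLM ∘ fun q => q.2.1) p ^ 2 •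
                    Complex.I •
                      Complex.ofRealCLM.comp (deriv (deriv (deriv ξ)) p.1 • ContinuousLinearMap.fst ℝ ℝ (ℝ × ℂ))) -
              ((γ:ℂ))⁻¹ • Complex.ofRealCLM.comp (deriv (deriv ξ) p.1 • ContinuousLinearMap.fst ℝ ℝ (ℝ × ℂ)))))) p := by
    refine H.congr_of_eventuallyEq (Filter.Eventually.of_forall fun q => ?_)
    refine Prod.ext ?_ (Prod.ext ?_ ?_) <;>
      simp only [Dfield, Function.comp, Complex.ofRealCLM_apply, Pi.mul_apply, Pi.sub_apply] <;>
      push_cast <;> ring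
  rw [H'.fderiv]
  simp [ContinuousLinearMap.prod_apply, ContinuousLinearMap.comp_apply,
    ContinuousLinearMap.smul_apply, ContinuousLinearMap.add_apply,
    ContinuousLinearMap.sub_apply, Complex.ofRealCLM_apply, smul_eq_mul]
  exact ⟨by ring, by push_cast; ring⟩

/-- `[D(ξ¹), D(ξ²)] = D(ξ¹ ξ²' - ξ² ξ¹')`. -/
theorem stmt_14 (γ : ℝ) (hγ : γ ≠ 0) (ξ₁ ξ₂ : ℝ → ℝ)
    (h₁ : ContDiff ℝ (⊤ : ℕ∞) ξ₁) (h₂ : ContDiff ℝ (⊤ : ℕ∞) ξ₂) (p : ℝ × ℝ × ℂ) :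
    lieBr (Dfield γ ξ₁) (Dfield γ ξ₂) p =
      Dfield γ (fun t => ξ₁ t * deriv ξ₂ t - ξ₂ t * deriv ξ₁ t) p := by
  obtain ⟨hd10, h1'⟩ := contDiff_infty_iff_deriv.1 (h₁.of_le (by simp))
  obtain ⟨hd11, h1''⟩ := contDiff_infty_iff_deriv.1 h1'
  obtain ⟨hd12, _⟩ := contDiff_infty_iff_deriv.1 h1''
  obtain ⟨hd20, h2'⟩ := contDiff_infty_iff_deriv.1 (h₂.of_le (by simp))
  obtain ⟨hd21, h2''⟩ := contDiff_infty_iff_deriv.1 h2'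
  obtain ⟨hd22, _⟩ := contDiff_infty_iff_deriv.1 h2''
  have e1 : deriv (fun t => ξ₁ t * deriv ξ₂ t - ξ₂ t * deriv ξ₁ t)
      = fun t => ξ₁ t * deriv (deriv ξ₂) t - ξ₂ t * deriv (deriv ξ₁) t := by
    funext t
    rw [deriv_fun_sub ((hd10 t).fun_mul (hd21 t)) ((hd20 t).fun_mul (hd11 t)),
        deriv_fun_mul (hd10 t) (hd21 t), deriv_fun_mul (hd20 t) (hd11 t)]
    ring
  have e2 : deriv (deriv (fun t => ξ₁ t * deriv ξ₂ t - ξ₂ t * deriv ξ₁ t)) p.1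
      = (deriv ξ₁ p.1 * deriv (deriv ξ₂) p.1 + ξ₁ p.1 * deriv (deriv (deriv ξ₂)) p.1)
        - (deriv ξ₂ p.1 * deriv (deriv ξ₁) p.1 + ξ₂ p.1 * deriv (deriv (deriv ξ₁)) p.1) := by
    rw [e1, deriv_fun_sub ((hd10 p.1).fun_mul (hd22 p.1)) ((hd20 p.1).fun_mul (hd12 p.1)),
        deriv_fun_mul (hd10 p.1) (hd22 p.1), deriv_fun_mul (hd20 p.1) (hd12 p.1)]
  have e1p := congrFun e1 p.1
  simp only [lieBr, fderivD γ ξ₂ h₂ p (Dfield γ ξ₁ p), fderivD γ ξ₁ h₁ p (Dfield γ ξ₂ p)]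
  refine Prod.ext ?_ (Prod.ext ?_ ?_) <;>
    simp only [Dfield, Prod.mk_sub_mk, e2, e1p] <;> push_cast <;> ring
end

section
/- (Commutation relation [D(ξ), G(χ)] = G(ξ·χ′ − (1/2)·ξ′·χ).) Let γ ≠ 0 be a real constant and let ξ, χ : ℝ → ℝ be smooth. Then the Lie bracket of the vector fields D(ξ) and G(χ) on ℝ×ℝ×ℂ equals the vector field G(χ̃), where χ̃(t) = ξ(t)·χ′(t) − (1/2)·ξ′(t)·χ(t); that is, at every point p ∈ ℝ×ℝ×ℂ: [D(ξ), G(χ)](p) = G(ξ·χ′ − (1/2)·ξ′·χ)(p). -/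
open ContinuousLinearMap in
/-- auxiliary: fderiv of `f ∘ fst` as a real-valued function on `ℝ × ℝ × ℂ`. -/
lemma aux_hasFDerivAt_comp_fst (f : ℝ → ℝ) (hf : Differentiable ℝ f) (p : ℝ × ℝ × ℂ) :
    HasFDerivAt (fun q : ℝ × ℝ × ℂ => f q.1)
      ((ContinuousLinearMap.smulRight (1 : ℝ →L[ℝ] ℝ) (deriv f p.1)).comp
        (fst ℝ ℝ (ℝ × ℂ))) p :=
  ((hf p.1).hasDerivAt.hasFDerivAt).comp p hasFDerivAt_fst

open ContinuousLinearMap in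
lemma aux_hasFDerivAt_comp_fst_c (f : ℝ → ℝ) (hf : Differentiable ℝ f) (p : ℝ × ℝ × ℂ) :
    HasFDerivAt (fun q : ℝ × ℝ × ℂ => ((f q.1 : ℝ) : ℂ))
      (Complex.ofRealCLM.comp
        ((ContinuousLinearMap.smulRight (1 : ℝ →L[ℝ] ℝ) (deriv f p.1)).comp
          (fst ℝ ℝ (ℝ × ℂ)))) p :=
  (Complex.ofRealCLM.hasFDerivAt).comp p (aux_hasFDerivAt_comp_fst f hf p)

open ContinuousLinearMap in
lemma aux_hasFDerivAt_x (p : ℝ × ℝ × ℂ) :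
    HasFDerivAt (fun q : ℝ × ℝ × ℂ => ((q.2.1 : ℝ) : ℂ))
      (Complex.ofRealCLM.comp ((fst ℝ ℝ ℂ).comp (snd ℝ ℝ (ℝ × ℂ)))) p :=
  (Complex.ofRealCLM.hasFDerivAt).comp p (hasFDerivAt_fst.comp p hasFDerivAt_snd :
    HasFDerivAt (fun q : ℝ × ℝ × ℂ => q.2.1) ((fst ℝ ℝ ℂ).comp (snd ℝ ℝ (ℝ × ℂ))) p)

open ContinuousLinearMap in
lemma aux_hasFDerivAt_xr (p : ℝ × ℝ × ℂ) :
    HasFDerivAt (fun q : ℝ × ℝ × ℂ => q.2.1)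
      ((fst ℝ ℝ ℂ).comp (snd ℝ ℝ (ℝ × ℂ))) p :=
  hasFDerivAt_fst.comp p hasFDerivAt_snd

open ContinuousLinearMap in
lemma aux_hasFDerivAt_z (p : ℝ × ℝ × ℂ) :
    HasFDerivAt (fun q : ℝ × ℝ × ℂ => q.2.2)
      ((snd ℝ ℝ ℂ).comp (snd ℝ ℝ (ℝ × ℂ))) p :=
  hasFDerivAt_snd.comp p hasFDerivAt_snd

open ContinuousLinearMap in
lemma aux_hasFDerivAt_x2 (p : ℝ × ℝ × ℂ) :
    HasFDerivAt (fun q : ℝ × ℝ × ℂ => ((q.2.1 : ℝ) : ℂ) ^ 2)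
      ((((p.2.1:ℝ):ℂ) • Complex.ofRealCLM.comp ((fst ℝ ℝ ℂ).comp (snd ℝ ℝ (ℝ × ℂ))) +
        ((p.2.1:ℝ):ℂ) • Complex.ofRealCLM.comp ((fst ℝ ℝ ℂ).comp (snd ℝ ℝ (ℝ × ℂ))))) p := by
  have h := (aux_hasFDerivAt_x p).mul (aux_hasFDerivAt_x p)
  simp only [pow_two]
  exact h

lemma aux_div_const {E 𝔸 : Type*} [NormedAddCommGroup E] [NormedSpace ℝ E]
    [NormedField 𝔸] [NormedAlgebra ℝ 𝔸] {f : E → 𝔸} {f' : E →L[ℝ] 𝔸} {p : E}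
    (h : HasFDerivAt f f' p) (c : 𝔸) :
    HasFDerivAt (fun y => f y / c) (c⁻¹ • f') p := by
  simpa only [div_eq_mul_inv] using h.mul_const c⁻¹

/-- `[D(ξ), G(χ)] = G(ξ χ' - (1/2) ξ' χ)`. -/
theorem stmt_15 (γ : ℝ) (hγ : γ ≠ 0) (ξ χ : ℝ → ℝ)
    (h₁ : ContDiff ℝ (⊤ : ℕ∞) ξ) (h₂ : ContDiff ℝ (⊤ : ℕ∞) χ) (p : ℝ × ℝ × ℂ) :
    lieBr (Dfield γ ξ) (Gfield χ) p =
      Gfield (fun t => ξ t * deriv χ t - (1 / 2) * deriv ξ t * χ t) p := by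
  -- differentiability facts
  have h₁' : ContDiff ℝ ((⊤:ℕ∞):WithTop ℕ∞) ξ := h₁.of_le (by simp)
  have h₂' : ContDiff ℝ ((⊤:ℕ∞):WithTop ℕ∞) χ := h₂.of_le (by simp)
  have hξ : Differentiable ℝ ξ := h₁.differentiable (by simp)
  have hξ'c : ContDiff ℝ ((⊤:ℕ∞):WithTop ℕ∞) (deriv ξ) := (contDiff_infty_iff_deriv.mp h₁').2
  have hξ' : Differentiable ℝ (deriv ξ) := hξ'c.differentiable (by simp)
  have hξ'' : Differentiable ℝ (deriv (deriv ξ)) :=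
    ((contDiff_infty_iff_deriv.mp hξ'c).2).differentiable (by simp)
  have hχ : Differentiable ℝ χ := h₂.differentiable (by simp)
  have hχ'c : ContDiff ℝ ((⊤:ℕ∞):WithTop ℕ∞) (deriv χ) := (contDiff_infty_iff_deriv.mp h₂').2
  have hχ' : Differentiable ℝ (deriv χ) := hχ'c.differentiable (by simp)
  have hχ'' : Differentiable ℝ (deriv (deriv χ)) :=
    ((contDiff_infty_iff_deriv.mp hχ'c).2).differentiable (by simp)
  -- HasFDerivAt for Gfield χ
  have hG : HasFDerivAt (Gfield χ) _ p :=
    HasFDerivAt.prodMk (hasFDerivAt_const (0 : ℝ) p)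
      (HasFDerivAt.prodMk (aux_hasFDerivAt_comp_fst χ hχ p)
        ((((aux_hasFDerivAt_comp_fst_c (deriv χ) hχ' p).const_mul (Complex.I / 2)).mul
            (aux_hasFDerivAt_x p)).mul (aux_hasFDerivAt_z p)))
  -- HasFDerivAt for Dfield γ ξ
  have hterm1 := ((((aux_hasFDerivAt_comp_fst_c (deriv (deriv ξ)) hξ'' p).const_mul
      Complex.I).mul (aux_hasFDerivAt_x2 p))|> (aux_div_const · 8))
  have hterm2 := (aux_hasFDerivAt_comp_fst_c (deriv ξ) hξ' p) |> (aux_div_const · (γ : ℂ))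
  have hterm0 := aux_div_const
    ((aux_hasFDerivAt_comp_fst (deriv ξ) hξ' p).mul (aux_hasFDerivAt_xr p)) 2
  have hD : HasFDerivAt (Dfield γ ξ) _ p :=
    HasFDerivAt.prodMk (aux_hasFDerivAt_comp_fst ξ hξ p)
      (HasFDerivAt.prodMk hterm0 ((hterm1.sub hterm2).mul (aux_hasFDerivAt_z p)))
  have hχt : deriv (fun t => ξ t * deriv χ t - 1 / 2 * deriv ξ t * χ t) p.1 =
      (deriv ξ p.1 * deriv χ p.1 + ξ p.1 * deriv (deriv χ) p.1) -
        (1 / 2 * deriv (deriv ξ) p.1 * χ p.1 + 1 / 2 * deriv ξ p.1 * deriv χ p.1) := by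
    rw [deriv_fun_sub ((hξ p.1).fun_mul (hχ' p.1))
        (((differentiableAt_const _).fun_mul (hξ' p.1)).fun_mul (hχ p.1)),
      deriv_fun_mul (hξ p.1) (hχ' p.1),
      deriv_fun_mul ((differentiableAt_const _).fun_mul (hξ' p.1)) (hχ p.1),
      deriv_const_mul _ (hξ' p.1)]
  simp only [lieBr, hG.fderiv, hD.fderiv]
  simp only [Gfield, Dfield, ContinuousLinearMap.prod_apply, ContinuousLinearMap.add_apply,
    ContinuousLinearMap.coe_smul', ContinuousLinearMap.coe_comp', Function.comp_apply,
    ContinuousLinearMap.smulRight_apply, ContinuousLinearMap.coe_fst',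
    ContinuousLinearMap.coe_snd', ContinuousLinearMap.one_apply, Pi.smul_apply,
    ContinuousLinearMap.zero_apply, Prod.mk_sub_mk, smul_eq_mul, hχt]
  refine Prod.ext ?_ (Prod.ext ?_ ?_)
  · simp
  · simp; ring
  · simp only [ContinuousLinearMap.sub_apply, ContinuousLinearMap.add_apply,
      ContinuousLinearMap.coe_smul', Pi.smul_apply, ContinuousLinearMap.coe_comp',
      Function.comp_apply, ContinuousLinearMap.smulRight_apply, ContinuousLinearMap.coe_fst',
      ContinuousLinearMap.coe_snd', ContinuousLinearMap.one_apply, Complex.ofRealCLM_apply,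
      smul_eq_mul, Pi.mul_apply, Pi.sub_apply]
    push_cast
    ring
end

section
/- (Commutation relation [D(ξ), λM] = (ξ·λ′)M.) Let γ ≠ 0 be a real constant and let ξ, λ : ℝ → ℝ be smooth. Then the Lie bracket of the vector fields D(ξ) and M(λ) on ℝ×ℝ×ℂ equals the vector field M(λ̃), where λ̃(t) = ξ(t)·λ′(t); that is, at every point p ∈ ℝ×ℝ×ℂ: [D(ξ), M(λ)](p) = M(ξ·λ′)(p). -/
open Complex ContinuousLinearMap
open scoped ContDiff

section helpers
variable {f : ℝ → ℝ} {f' : ℝ} (p : ℝ × ℝ × ℂ)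

/-- coordinate CLMs -/
noncomputable def Tc : (ℝ × ℝ × ℂ) →L[ℝ] ℝ := fst ℝ ℝ (ℝ × ℂ)
noncomputable def Xc : (ℝ × ℝ × ℂ) →L[ℝ] ℝ := (fst ℝ ℝ ℂ).comp (snd ℝ ℝ (ℝ × ℂ))
noncomputable def Zc : (ℝ × ℝ × ℂ) →L[ℝ] ℂ := (snd ℝ ℝ ℂ).comp (snd ℝ ℝ (ℝ × ℂ))

lemma hXC : HasFDerivAt (fun q : ℝ × ℝ × ℂ => ((q.2.1 : ℝ) : ℂ))
    (Complex.ofRealCLM.comp Xc) p :=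
  (Complex.ofRealCLM.comp Xc).hasFDerivAt

lemma hZ : HasFDerivAt (fun q : ℝ × ℝ × ℂ => q.2.2) Zc p := Zc.hasFDerivAt

lemma hFC (hf : HasDerivAt f f' p.1) :
    HasFDerivAt (fun q : ℝ × ℝ × ℂ => ((f q.1 : ℝ) : ℂ))
      (Complex.ofRealCLM.comp (((1 : ℝ →L[ℝ] ℝ).smulRight f').comp Tc)) p :=
  Complex.ofRealCLM.hasFDerivAt.comp p (hf.hasFDerivAt.comp p Tc.hasFDerivAt)

lemma hF (hf : HasDerivAt f f' p.1) :
    HasFDerivAt (fun q : ℝ × ℝ × ℂ => f q.1)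
      (((1 : ℝ →L[ℝ] ℝ).smulRight f').comp Tc) p :=
  hf.hasFDerivAt.comp p Tc.hasFDerivAt

end helpers

lemma HasFDerivAt.divc {𝔸 : Type*} [NormedField 𝔸] [NormedAlgebra ℝ 𝔸]
    {f : ℝ × ℝ × ℂ → 𝔸} {f' : (ℝ × ℝ × ℂ) →L[ℝ] 𝔸} {p : ℝ × ℝ × ℂ}
    (h : HasFDerivAt f f' p) (c : 𝔸) :
    HasFDerivAt (fun y => f y / c) (c⁻¹ • f') p := by
  simpa only [div_eq_mul_inv] using h.mul_const c⁻¹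


/-- `[D(ξ), λM] = (ξ λ') M`. -/
theorem stmt_16 (γ : ℝ) (hγ : γ ≠ 0) (ξ lam : ℝ → ℝ)
    (h₁ : ContDiff ℝ (⊤ : ℕ∞) ξ) (h₂ : ContDiff ℝ (⊤ : ℕ∞) lam) (p : ℝ × ℝ × ℂ) :
    lieBr (Dfield γ ξ) (Mfield lam) p =
      Mfield (fun t => ξ t * deriv lam t) p := by
  have h₁' : ContDiff ℝ ∞ ξ := h₁.of_le (by simp)
  have h₂' : ContDiff ℝ ∞ lam := h₂.of_le (by simp)
  have hξd : ContDiff ℝ ∞ (deriv ξ) := (contDiff_infty_iff_deriv.mp h₁').2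
  have hξdd : ContDiff ℝ ∞ (deriv (deriv ξ)) := (contDiff_infty_iff_deriv.mp hξd).2
  have hlamd : ContDiff ℝ ∞ (deriv lam) := (contDiff_infty_iff_deriv.mp h₂').2
  have Hξ : HasDerivAt ξ (deriv ξ p.1) p.1 :=
    ((contDiff_infty_iff_deriv.mp h₁').1 p.1).hasDerivAt
  have Hξd : HasDerivAt (deriv ξ) (deriv (deriv ξ) p.1) p.1 :=
    ((contDiff_infty_iff_deriv.mp hξd).1 p.1).hasDerivAt
  have Hξdd : HasDerivAt (deriv (deriv ξ)) (deriv (deriv (deriv ξ)) p.1) p.1 :=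
    ((contDiff_infty_iff_deriv.mp hξdd).1 p.1).hasDerivAt
  have Hlam : HasDerivAt lam (deriv lam p.1) p.1 :=
    ((contDiff_infty_iff_deriv.mp h₂').1 p.1).hasDerivAt
  have Hlamd : HasDerivAt (deriv lam) (deriv (deriv lam) p.1) p.1 :=
    ((contDiff_infty_iff_deriv.mp hlamd).1 p.1).hasDerivAt
  have hM : HasFDerivAt (Mfield lam) _ p :=
    HasFDerivAt.prodMk (hasFDerivAt_const (0:ℝ) p) (HasFDerivAt.prodMk (hasFDerivAt_const (0:ℝ) p)
      (((hFC p Hlam).const_mul Complex.I).mul (hZ p)))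
  have hX2 : HasFDerivAt (fun q : ℝ × ℝ × ℂ => ((q.2.1 : ℝ) : ℂ) ^ 2) _ p :=
    ((hXC p).mul (hXC p)).congr_of_eventuallyEq (.of_forall fun q => pow_two _)
  have hD : HasFDerivAt (Dfield γ ξ) _ p :=
    (hF p Hξ).prodMk (((hF p Hξd).mul Xc.hasFDerivAt |>.divc 2).prodMk
      (((((hFC p Hξdd).const_mul Complex.I).mul hX2 |>.divc 8).sub
        ((hFC p Hξd).divc (γ:ℂ))).mul (hZ p)))
  rw [lieBr, hM.fderiv, hD.fderiv]
  simp only [ContinuousLinearMap.prod_apply, ContinuousLinearMap.add_apply,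
    ContinuousLinearMap.coe_comp', Function.comp_apply, ContinuousLinearMap.smulRight_apply,
    ContinuousLinearMap.one_apply, ContinuousLinearMap.coe_smul', Pi.smul_apply,
    ContinuousLinearMap.coe_sub', Pi.sub_apply, ContinuousLinearMap.zero_apply,
    Complex.ofRealCLM_apply, Tc, Xc, Zc, ContinuousLinearMap.coe_fst',
    ContinuousLinearMap.coe_snd', smul_eq_mul, Dfield, Mfield,
    ContinuousLinearMap.smul_apply, Pi.mul_apply]
  simp only [Prod.mk_sub_mk, Prod.mk.injEq]
  refine ⟨by ring, by ring, ?_⟩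
  push_cast
  ring
end

section
/- (Commutation relation [G(χ¹), G(χ²)] = (1/2)(χ¹·χ²′ − χ²·χ¹′)M.) Let γ ≠ 0 be a real constant and let χ¹, χ² : ℝ → ℝ be smooth. Then the Lie bracket of the vector fields G(χ¹) and G(χ²) on ℝ×ℝ×ℂ equals the vector field M(λ), where λ(t) = (1/2)·(χ¹(t)·(χ²)′(t) − χ²(t)·(χ¹)′(t)); that is, at every point p ∈ ℝ×ℝ×ℂ: [G(χ¹), G(χ²)](p) = M((1/2)·(χ¹·(χ²)′ − χ²·(χ¹)′))(p). -/
open Complex ContinuousLinearMap in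
lemma fderiv_Gfield (χ : ℝ → ℝ) (h : ContDiff ℝ (⊤ : ℕ∞) χ) (p v : ℝ × ℝ × ℂ) :
    fderiv ℝ (Gfield χ) p v =
      (0, deriv χ p.1 * v.1,
        Complex.I / 2 * (((deriv (deriv χ) p.1 : ℝ) : ℂ) * v.1 * p.2.1 * p.2.2
          + ((deriv χ p.1 : ℝ) : ℂ) * ((v.2.1 : ℂ) * p.2.2 + (p.2.1 : ℂ) * v.2.2))) := by
  have h' : ContDiff ℝ (⊤ : ℕ∞) χ := h.of_le (by simp)
  have hχd : Differentiable ℝ χ := h'.differentiable (by simp)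
  have hdd : Differentiable ℝ (deriv χ) :=
    (h'.iterate_deriv 1).differentiable (by simp)
  have h1 : HasFDerivAt (fun q : ℝ × ℝ × ℂ => χ q.1)
      ((deriv χ p.1) • fst ℝ ℝ (ℝ × ℂ)) p := by
    have := ((hχd p.1).hasDerivAt).hasFDerivAt.comp p (hasFDerivAt_fst (𝕜 := ℝ))
    refine this.congr_fderiv ?_
    ext q <;> simp [mul_comm]
  have hu : HasFDerivAt (fun q : ℝ × ℝ × ℂ => ((deriv χ q.1 : ℝ) : ℂ))
      (Complex.ofRealCLM.comp ((deriv (deriv χ) p.1) • fst ℝ ℝ (ℝ × ℂ))) p := by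
    have hb : HasFDerivAt (fun q : ℝ × ℝ × ℂ => deriv χ q.1)
        ((deriv (deriv χ) p.1) • fst ℝ ℝ (ℝ × ℂ)) p := by
      have := ((hdd p.1).hasDerivAt).hasFDerivAt.comp p (hasFDerivAt_fst (𝕜 := ℝ))
      refine this.congr_fderiv ?_
      ext q <;> simp [mul_comm]
    exact (Complex.ofRealCLM.hasFDerivAt).comp p hb
  have hv : HasFDerivAt (fun q : ℝ × ℝ × ℂ => ((q.2.1 : ℝ) : ℂ))
      (Complex.ofRealCLM.comp ((fst ℝ ℝ ℂ).comp (snd ℝ ℝ (ℝ × ℂ)))) p :=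
    (Complex.ofRealCLM.comp ((fst ℝ ℝ ℂ).comp (snd ℝ ℝ (ℝ × ℂ)))).hasFDerivAt
  have hw : HasFDerivAt (fun q : ℝ × ℝ × ℂ => q.2.2)
      ((snd ℝ ℝ ℂ).comp (snd ℝ ℝ (ℝ × ℂ))) p :=
    ((snd ℝ ℝ ℂ).comp (snd ℝ ℝ (ℝ × ℂ))).hasFDerivAt
  have hf := ((hu.mul (hv.mul hw)).const_mul (Complex.I / 2))
  have heq : Gfield χ = fun q : ℝ × ℝ × ℂ =>
      ((0 : ℝ), χ q.1, Complex.I / 2 * (((deriv χ q.1 : ℝ) : ℂ) * (((q.2.1 : ℝ) : ℂ) * q.2.2))) := by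
    funext q; simp only [Gfield]; ring_nf
  have hG := (hasFDerivAt_const (0 : ℝ) p).prodMk (h1.prodMk hf)
  simp only [Pi.mul_apply] at hG
  rw [heq, hG.fderiv]
  simp
  ring

/-- `[G(χ¹), G(χ²)] = (1/2)(χ¹ χ²' - χ² χ¹') M`. -/
theorem stmt_17 (γ : ℝ) (hγ : γ ≠ 0) (χ₁ χ₂ : ℝ → ℝ)
    (h₁ : ContDiff ℝ (⊤ : ℕ∞) χ₁) (h₂ : ContDiff ℝ (⊤ : ℕ∞) χ₂) (p : ℝ × ℝ × ℂ) :
    lieBr (Gfield χ₁) (Gfield χ₂) p =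
      Mfield (fun t => (1 / 2) * (χ₁ t * deriv χ₂ t - χ₂ t * deriv χ₁ t)) p := by
  simp only [lieBr, fderiv_Gfield χ₁ h₁, fderiv_Gfield χ₂ h₂, Gfield, Mfield,
    Prod.mk_sub_mk]
  refine Prod.ext ?_ (Prod.ext ?_ ?_)
  · simp
  · simp [Gfield]
  · simp only [Gfield]
    push_cast
    ring
end
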